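/- arXiv:math/0409053 — 5 statements merged into one kernel-verified Lean document; each statement's English description precedes it below -/
import Mathlib

section
/- Let g be a Lie algebra over a field F of characteristic zero. Equip the full linear dual U(g)* of the universal enveloping algebra U(g) with the commutative convolution product (h·h')(x) := (h⊗h')(Δ(x)) and unit ε, where Δ: U(g) → U(g)⊗U(g) is the algebra homomorphism determined by Δ(x) = 1⊗x + x⊗1 for x ∈ g and ε: U(g) → F is the algebra homomorphism determined by ε(x) = 0 for x ∈ g. Then the algebra U(g)* has no zero divisors. -/
/-!
Filter `U(g)` by word length. If `n` is least with `h` nonzero on the `n`-th step, then modulo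
the lower step the words of length `n` commute, so on them `h` is a symmetric multilinear form
on `g`; by polarization (characteristic zero) `h (z ^ n) ≠ 0` for some `z ∈ g`. As `z` is
primitive, `(h h') (z ^ (n + m)) = (n + m).choose n * h (z ^ n) * h' (z ^ m)` when `n`, `m` are
the least degrees of `h`, `h'`. Along the line `u + s (v - u)` through witnesses `u` for `h` and
`v` for `h'`, both factors are nonzero polynomials in `s`, so over the infinite field `F` their
product does not vanish somewhere.
-/

open TensorProduct

open Finset in
theorem Finset.sum_superset_neg_one_pow_card_compl {α : Type*} [Fintype α] [DecidableEq α]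
    (T : Finset α) :
    ∑ S with T ⊆ S, (-1 : ℤ) ^ #Sᶜ = if T = univ then 1 else 0 := by
  simp only [← compl_eq_empty_iff (s := T), ← sum_powerset_neg_one_pow_card]
  refine sum_nbij' compl compl (fun S hS => ?_) (fun S hS => ?_) (fun _ _ => compl_compl _)
    (fun _ _ => compl_compl _) (fun _ _ => rfl)
  · simpa [subset_compl_comm] using (mem_filter.mp hS).2
  · simpa [subset_compl_comm] using mem_powerset.mp hS

namespace MultilinearMap

open Finset

variable {R M N : Type*} [CommRing R] [AddCommGroup M] [Module R M] [AddCommGroup N] [Module R N]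
  {k : ℕ}

theorem sum_map_comp_perm (f : MultilinearMap R (fun _ : Fin k => M) N) (v : Fin k → M) :
    ∑ σ : Equiv.Perm (Fin k), f (v ∘ σ) =
      ∑ S : Finset (Fin k), (-1 : ℤ) ^ #Sᶜ • f (fun _ => ∑ i ∈ S, v i) := by
  classical
  have hexpand : ∀ S : Finset (Fin k), f (fun _ => ∑ i ∈ S, v i) =
      ∑ r : Fin k → Fin k with univ.image r ⊆ S, f (v ∘ r) := by
    intro S
    rw [map_sum_finset]
    refine sum_congr (by ext r; simp [Fintype.mem_piFinset, image_subset_iff]) fun _ _ => rfl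
  simp_rw [hexpand, smul_sum]
  rw [sum_comm' (t' := univ) (s' := fun r => univ.filter (univ.image r ⊆ ·)) (by simp)]
  simp_rw [← sum_smul, sum_superset_neg_one_pow_card_compl, ite_smul, one_smul, zero_smul,
    ← sum_filter]
  refine sum_bij (fun σ _ => ⇑σ) (fun σ _ => ?_) (fun _ _ _ _ h => Equiv.ext (congrFun h))
    (fun r hr => ?_) (fun _ _ => rfl)
  · simp [image_univ_of_surjective σ.surjective]
  · have hsurj : ∀ y, ∃ x, r x = y := by simpa [eq_univ_iff_forall] using (mem_filter.mp hr).2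
    exact ⟨Equiv.ofBijective r (Finite.surjective_iff_bijective.mp hsurj), mem_univ _, rfl⟩

theorem eq_zero_of_map_comp_perm_of_map_const [IsAddTorsionFree N]
    (f : MultilinearMap R (fun _ : Fin k => M) N)
    (hsymm : ∀ (v : Fin k → M) (σ : Equiv.Perm (Fin k)), f (v ∘ σ) = f v)
    (hdiag : ∀ x, f (fun _ => x) = 0) : f = 0 := by
  ext v
  have h := f.sum_map_comp_perm v
  simp only [hsymm, hdiag, smul_zero, sum_const_zero, sum_const, card_univ,
    Fintype.card_perm, Fintype.card_fin] at h
  exact nsmul_right_injective (Nat.factorial_ne_zero k) (by simpa using h)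

end MultilinearMap

namespace UniversalEnvelopingAlgebra

-- the Lie ring structure on `U(g)` for which `ι` is a Lie algebra morphism
attribute [local instance] LieRing.ofAssociativeRing

variable (R L : Type*) [CommRing R] [LieRing L] [LieAlgebra R L]

def filtration (n : ℕ) : Submodule R (UniversalEnvelopingAlgebra R L) :=
  Submodule.span R {x | ∃ l : List L, l.length ≤ n ∧ (l.map (ι R)).prod = x}

variable {R L}

theorem list_prod_map_ι_mem_filtration {l : List L} {n : ℕ} (hl : l.length ≤ n) :
    (l.map (ι R)).prod ∈ filtration R L n :=
  Submodule.subset_span ⟨l, hl, rfl⟩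

theorem filtration_mono : Monotone (filtration R L) := fun _ _ hmn =>
  Submodule.span_mono fun _ ⟨l, hl, hx⟩ => ⟨l, hl.trans hmn, hx⟩

theorem ι_pow_mem_filtration (z : L) (n : ℕ) : ι R z ^ n ∈ filtration R L n := by
  simpa using list_prod_map_ι_mem_filtration (R := R) (l := List.replicate n z) (by simp)

theorem filtration_mul_le (m n : ℕ) :
    filtration R L m * filtration R L n ≤ filtration R L (m + n) := by
  rw [filtration, filtration, Submodule.span_mul_span, Submodule.span_le]
  rintro _ ⟨_, ⟨l, hl, rfl⟩, _, ⟨l', hl', rfl⟩, rfl⟩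
  simpa using list_prod_map_ι_mem_filtration (R := R) (l := l ++ l') (by simp; omega)

theorem exists_mem_filtration (x : UniversalEnvelopingAlgebra R L) :
    ∃ n, x ∈ filtration R L n := by
  obtain ⟨y, rfl⟩ : ∃ y, mkAlgHom R L y = x := (ringCon R L).mk'_surjective x
  induction y using TensorAlgebra.induction with
  | algebraMap r =>
    refine ⟨0, ?_⟩
    rw [AlgHom.commutes, Algebra.algebraMap_eq_smul_one]
    exact Submodule.smul_mem _ _
      (by simpa using list_prod_map_ι_mem_filtration (R := R) (l := []) le_rfl)
  | ι z => exact ⟨1, by simpa [ι_apply] using ι_pow_mem_filtration (R := R) z 1⟩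
  | mul a b iha ihb =>
    obtain ⟨p, hp⟩ := iha
    obtain ⟨q, hq⟩ := ihb
    exact ⟨p + q, filtration_mul_le p q (by rw [map_mul]; exact Submodule.mul_mem_mul hp hq)⟩
  | add a b iha ihb =>
    obtain ⟨p, hp⟩ := iha
    obtain ⟨q, hq⟩ := ihb
    exact ⟨max p q, by
      rw [map_add]
      exact add_mem (filtration_mono (le_max_left p q) hp) (filtration_mono (le_max_right p q) hq)⟩

theorem list_prod_map_ι_sub_mem_filtration_of_perm {l l' : List L} (hp : l.Perm l') {n : ℕ}
    (hl : l.length = n + 1) :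
    (l.map (ι R)).prod - (l'.map (ι R)).prod ∈ filtration R L n := by
  induction hp generalizing n with
  | nil => simp at hl
  | @cons x l₁ l₂ hp ih =>
    simp only [List.map_cons, List.prod_cons, ← mul_sub]
    cases n with
    | zero =>
      obtain rfl : l₁ = [] := List.length_eq_zero_iff.mp (by simpa using hl)
      simp [List.nil_perm.mp hp]
    | succ n =>
      rw [add_comm]
      exact filtration_mul_le 1 n (Submodule.mul_mem_mul
        (by simpa using ι_pow_mem_filtration (R := R) x 1) (ih (by simpa using hl)))
  | swap x y l =>
    have hbracket : ι R y * ι R x - ι R x * ι R y = ι R ⁅y, x⁆ := by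
      simp [LieRing.of_associative_ring_bracket]
    simp only [List.map_cons, List.prod_cons, ← mul_assoc, ← sub_mul, hbracket]
    exact list_prod_map_ι_mem_filtration (l := ⁅y, x⁆ :: l) (by simp at hl ⊢; omega)
  | trans hp₁ hp₂ ih₁ ih₂ =>
    simpa using add_mem (ih₁ hl) (ih₂ (hp₁.length_eq ▸ hl))

theorem map_list_prod_eq_of_perm (h : Module.Dual R (UniversalEnvelopingAlgebra R L)) {n : ℕ}
    (hlow : filtration R L n ≤ LinearMap.ker h) {l l' : List L} (hp : l.Perm l')
    (hl : l.length = n + 1) :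
    h (l.map (ι R)).prod = h (l'.map (ι R)).prod :=
  sub_eq_zero.mp (by rw [← map_sub]; exact hlow (list_prod_map_ι_sub_mem_filtration_of_perm hp hl))

theorem filtration_le_ker_of_map_ι_pow [IsAddTorsionFree R]
    (h : Module.Dual R (UniversalEnvelopingAlgebra R L)) {n : ℕ}
    (hlow : ∀ i < n, filtration R L i ≤ LinearMap.ker h) (hpow : ∀ z, h (ι R z ^ n) = 0) :
    filtration R L n ≤ LinearMap.ker h := by
  rw [filtration, Submodule.span_le]
  rintro _ ⟨l, hl, rfl⟩
  obtain hlt | rfl := hl.lt_or_eq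
  · exact hlow _ hlt (list_prod_map_ι_mem_filtration le_rfl)
  let B : MultilinearMap R (fun _ : Fin l.length => L) R :=
    h.compMultilinearMap
      ((MultilinearMap.mkPiAlgebraFin R l.length _).compLinearMap fun _ => (ι R).toLinearMap)
  have hB : ∀ v, B v = h ((List.ofFn v).map (ι R)).prod := fun v => by
    simp only [B, LinearMap.compMultilinearMap_apply, MultilinearMap.compLinearMap_apply,
      MultilinearMap.mkPiAlgebraFin_apply, List.map_ofFn]
    rfl
  have hB0 : B = 0 := by
    refine B.eq_zero_of_map_comp_perm_of_map_const (fun v σ => ?_) (fun z => ?_)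
    · rw [hB, hB]
      rcases l.length.eq_zero_or_pos with hlen | hpos
      · rw [show v ∘ σ = v from funext fun i => absurd i.2 (by omega)]
      · exact map_list_prod_eq_of_perm h (hlow (l.length - 1) (by omega))
          (σ.ofFn_comp_perm v) (by simp; omega)
    · simpa [hB, List.ofFn_const, List.map_replicate, List.prod_replicate] using hpow z
  simpa [hB] using congr($hB0 l.get)

theorem exists_map_ι_pow_ne_zero [IsAddTorsionFree R]
    {h : Module.Dual R (UniversalEnvelopingAlgebra R L)} (hh : h ≠ 0) :
    ∃ n, (∀ i < n, filtration R L i ≤ LinearMap.ker h) ∧ ∃ z, h (ι R z ^ n) ≠ 0 := by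
  classical
  have hex : ∃ n, ¬ filtration R L n ≤ LinearMap.ker h := by
    obtain ⟨x, hx⟩ := DFunLike.ne_iff.mp hh
    obtain ⟨n, hn⟩ := exists_mem_filtration x
    exact ⟨n, fun hle => hx (hle hn)⟩
  have hlow : ∀ i < Nat.find hex, filtration R L i ≤ LinearMap.ker h :=
    fun i hi => not_not.mp (Nat.find_min hex hi)
  refine ⟨Nat.find hex, hlow, ?_⟩
  by_contra! hpow
  exact Nat.find_spec hex (filtration_le_ker_of_map_ι_pow h hlow hpow)

end UniversalEnvelopingAlgebra

section Convolution

open Finset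

variable {R A : Type*} [CommRing R] [Ring A] [Algebra R A] (Δ : A →ₐ[R] A ⊗[R] A) {a : A}

theorem dualDistrib_apply_comul_pow (ha : Δ a = 1 ⊗ₜ a + a ⊗ₜ 1) (h h' : Module.Dual R A)
    (N : ℕ) :
    dualDistrib R A A (h ⊗ₜ h') (Δ (a ^ N)) =
      ∑ i ∈ range (N + 1), h (a ^ i) * h' (a ^ (N - i)) * N.choose i := by
  have hcomm : Commute (a ⊗ₜ[R] (1 : A)) (1 ⊗ₜ a) := by
    simp [Commute, SemiconjBy, Algebra.TensorProduct.tmul_mul_tmul]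
  rw [map_pow, ha, add_comm, hcomm.add_pow, map_sum]
  refine sum_congr rfl fun i _ => ?_
  rw [← nsmul_eq_mul', Algebra.TensorProduct.tmul_pow, Algebra.TensorProduct.tmul_pow,
    Algebra.TensorProduct.tmul_mul_tmul, one_pow, one_pow, mul_one, one_mul, map_nsmul,
    dualDistrib_apply, nsmul_eq_mul']

theorem dualDistrib_apply_comul_pow_add (ha : Δ a = 1 ⊗ₜ a + a ⊗ₜ 1) {h h' : Module.Dual R A}
    {n m : ℕ} (hn : ∀ i < n, h (a ^ i) = 0) (hm : ∀ j < m, h' (a ^ j) = 0) :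
    dualDistrib R A A (h ⊗ₜ h') (Δ (a ^ (n + m))) = h (a ^ n) * h' (a ^ m) * (n + m).choose n := by
  rw [dualDistrib_apply_comul_pow Δ ha, sum_eq_single_of_mem n (by simp)]
  · rw [Nat.add_sub_cancel_left]
  · intro i hi hin
    obtain hlt | hgt := hin.lt_or_gt
    · rw [hn i hlt, zero_mul, zero_mul]
    · rw [hm _ (by simp at hi; omega), mul_zero, zero_mul]

end Convolution

section PolynomialLine

open Polynomial

variable {R A : Type*} [CommRing R] [Ring A] [Algebra R A]

theorem exists_polynomial_eval_eq_map_add_smul_pow (φ : A →ₗ[R] R) (x y : A) (k : ℕ) :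
    ∃ P : R[X], ∀ s : R, P.eval s = φ ((x + s • y) ^ k) := by
  induction k generalizing φ with
  | zero => exact ⟨C (φ 1), fun s => by simp⟩
  | succ k ih =>
    obtain ⟨P, hP⟩ := ih (φ ∘ₗ LinearMap.mulRight R x)
    obtain ⟨Q, hQ⟩ := ih (φ ∘ₗ LinearMap.mulRight R y)
    refine ⟨P + X * Q, fun s => ?_⟩
    simp [hP, hQ, pow_succ, mul_add]

theorem exists_map_pow_mul_map_pow_ne_zero [IsDomain R] [Infinite R] (φ ψ : A →ₗ[R] R)
    {x y : A} {n m : ℕ} (hx : φ (x ^ n) ≠ 0) (hy : ψ (y ^ m) ≠ 0) :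
    ∃ s : R, φ ((x + s • (y - x)) ^ n) * ψ ((x + s • (y - x)) ^ m) ≠ 0 := by
  obtain ⟨P, hP⟩ := exists_polynomial_eval_eq_map_add_smul_pow φ x (y - x) n
  obtain ⟨Q, hQ⟩ := exists_polynomial_eval_eq_map_add_smul_pow ψ x (y - x) m
  have hP0 : P ≠ 0 := fun h0 => hx (by simpa [h0] using (hP 0).symm)
  have hQ0 : Q ≠ 0 := fun h0 => hy (by simpa [h0] using (hQ 1).symm)
  by_contra! H
  exact mul_ne_zero hP0 hQ0 (zero_of_eval_zero _ fun s => by simp [hP, hQ, H])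

end PolynomialLine

open UniversalEnvelopingAlgebra in
theorem stmt_0_general
    (F : Type*) [Field F] [CharZero F]
    (g : Type*) [LieRing g] [LieAlgebra F g]
    (Δ : UniversalEnvelopingAlgebra F g →ₐ[F]
      (UniversalEnvelopingAlgebra F g ⊗[F] UniversalEnvelopingAlgebra F g))
    (hΔ : ∀ x : g, Δ (UniversalEnvelopingAlgebra.ι F x) =
      1 ⊗ₜ[F] (UniversalEnvelopingAlgebra.ι F x) + (UniversalEnvelopingAlgebra.ι F x) ⊗ₜ[F] 1)
    (h h' : Module.Dual F (UniversalEnvelopingAlgebra F g))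
    (hzero : (TensorProduct.dualDistrib F (UniversalEnvelopingAlgebra F g)
        (UniversalEnvelopingAlgebra F g) (h ⊗ₜ[F] h')) ∘ₗ Δ.toLinearMap = 0) :
    h = 0 ∨ h' = 0 := by
  by_contra! hne
  obtain ⟨n, hn, u, hu⟩ := exists_map_ι_pow_ne_zero hne.1
  obtain ⟨m, hm, v, hv⟩ := exists_map_ι_pow_ne_zero hne.2
  obtain ⟨s, hs⟩ := exists_map_pow_mul_map_pow_ne_zero h h' hu hv
  set z := u + s • (v - u)
  have hz : ι F z = ι F u + s • (ι F v - ι F u) := by simp [z]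
  have hconv := congr($hzero (ι F z ^ (n + m)))
  rw [LinearMap.comp_apply, AlgHom.toLinearMap_apply,
    dualDistrib_apply_comul_pow_add Δ (hΔ z)
      (fun i hi => hn i hi (ι_pow_mem_filtration z i))
      (fun j hj => hm j hj (ι_pow_mem_filtration z j)), LinearMap.zero_apply, hz] at hconv
  exact hs (by simpa [(Nat.choose_pos (Nat.le_add_right n m)).ne'] using hconv)

/-- **No zero divisors in `U(g)*`.**
Let `g` be a Lie algebra over a field `F` of characteristic zero.  Let
`Δ : U(g) → U(g) ⊗ U(g)` be the comultiplication, i.e. the algebra homomorphism determined by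
`Δ(x) = 1 ⊗ x + x ⊗ 1` for `x ∈ g`, and let `ε : U(g) → F` be the counit, i.e. the algebra
homomorphism determined by `ε(x) = 0` for `x ∈ g`.  The full dual `U(g)*` is a commutative
algebra with unit `ε` under the convolution product `(h · h')(a) = (h ⊗ h')(Δ(a))`.
Then this algebra has no zero divisors: if the convolution product of `h` and `h'` is zero,
then `h = 0` or `h' = 0`. -/
theorem stmt_0
    (F : Type*) [Field F] [CharZero F]
    (g : Type*) [LieRing g] [LieAlgebra F g]
    (Δ : UniversalEnvelopingAlgebra F g →ₐ[F]
      (UniversalEnvelopingAlgebra F g ⊗[F] UniversalEnvelopingAlgebra F g))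
    (hΔ : ∀ x : g, Δ (UniversalEnvelopingAlgebra.ι F x) =
      1 ⊗ₜ[F] (UniversalEnvelopingAlgebra.ι F x) + (UniversalEnvelopingAlgebra.ι F x) ⊗ₜ[F] 1)
    (ε : UniversalEnvelopingAlgebra F g →ₐ[F] F)
    (hε : ∀ x : g, ε (UniversalEnvelopingAlgebra.ι F x) = 0)
    (h h' : Module.Dual F (UniversalEnvelopingAlgebra F g))
    (hzero : (TensorProduct.dualDistrib F (UniversalEnvelopingAlgebra F g)
        (UniversalEnvelopingAlgebra F g) (h ⊗ₜ[F] h')) ∘ₗ Δ.toLinearMap = 0) :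
    h = 0 ∨ h' = 0 :=
  stmt_0_general F g Δ hΔ h h' hzero
end

section
/- M is a submonoid of the multiplicative monoid of the algebra Nat; the set F[M] of all matrix coefficients is a point-separating algebra of F-valued functions on M; and for every m ∈ M the left and right multiplication maps l_m, r_m: M → M admit comorphisms of F[M] (i.e. f ∘ l_m ∈ F[M] and f ∘ r_m ∈ F[M] for every f ∈ F[M]), so that (π(m_1,m_2)f)(m) := f(m_1 m m_2) defines an action of the monoid M^op × M on the algebra F[M] by algebra endomorphisms. -/
/-!
Everything is read off the axioms of the category. Naturality, the tensor condition and
triviality on one-dimensional trivial modules are stable under composition, so `M` is a monoid.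
Sums and products of matrix coefficients are matrix coefficients of direct sums and tensor
products (on `V ⊗ W` an element of `M` acts as `m_V ⊗ m_W`), and constants are matrix
coefficients of a one-dimensional trivial module, on which `M` acts as the identity. Points are
separated because each `V^du` separates the points of `V`, and translations act on coefficients
by `f_{φv}(m₀ m) = f_{m₀ᵗφ, v}(m)` and `f_{φv}(m m₀) = f_{φ, m₀ v}(m)`.
-/

open TensorProduct

attribute [local instance 100] LieRing.ofAssociativeRing LieAlgebra.ofAssociativeAlgebra

universe u v w

/-- The data of a (full sub)category `C` of `g`-modules together with a category of duals:
an index type `ι`, for each index a `g`-module `V i`, and a chosen point-separating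
subspace `du i` of the full linear dual of `V i`. -/
structure TannakaSetting (F : Type u) [Field F] (g : Type v) [LieRing g] [LieAlgebra F g] where
  ι : Type w
  V : ι → Type w
  [iAdd : ∀ i, AddCommGroup (V i)]
  [iMod : ∀ i, Module F (V i)]
  ρ : ∀ i, g →ₗ⁅F⁆ Module.End F (V i)
  du : ∀ i, Submodule F (Module.Dual F (V i))

attribute [instance] TannakaSetting.iAdd TannakaSetting.iMod

namespace TannakaSetting

variable {F : Type u} [Field F] {g : Type v} [LieRing g] [LieAlgebra F g]
variable (D : TannakaSetting F g)

/-- `g`-equivariant linear maps between objects of the category. -/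
def IsHom {i j : D.ι} (f : D.V i →ₗ[F] D.V j) : Prop :=
  ∀ x : g, f ∘ₗ (D.ρ i x : Module.End F (D.V i)) = (D.ρ j x : Module.End F (D.V j)) ∘ₗ f

/-- An endomorphism of `V i` lies in `End_{V^du}(V)`, i.e. its transpose preserves
the chosen dual subspace. -/
def PreservesDu (i : D.ι) (f : Module.End F (D.V i)) : Prop :=
  ∀ φ ∈ D.du i, f.dualMap φ ∈ D.du i

/-- The action of `x ∈ g` on a tensor product of two objects. -/
noncomputable def tensorρ (i j : D.ι) (x : g) : Module.End F (D.V i ⊗[F] D.V j) :=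
  TensorProduct.map (D.ρ i x) LinearMap.id + TensorProduct.map LinearMap.id (D.ρ j x)

/-- `e` realizes `V k` as a tensor product of the `g`-modules `V i` and `V j`. -/
def IsTensorProd (i j k : D.ι) (e : D.V k ≃ₗ[F] (D.V i ⊗[F] D.V j)) : Prop :=
  ∀ x : g, e.toLinearMap ∘ₗ (D.ρ k x : Module.End F (D.V k)) = D.tensorρ i j x ∘ₗ e.toLinearMap

/-- `e` realizes `V k` as a direct sum of the `g`-modules `V i` and `V j`. -/
def IsSumProd (i j k : D.ι) (e : D.V k ≃ₗ[F] (D.V i × D.V j)) : Prop :=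
  ∀ x : g, e.toLinearMap ∘ₗ (D.ρ k x : Module.End F (D.V k)) =
    ((D.ρ i x : Module.End F (D.V i)).prodMap (D.ρ j x : Module.End F (D.V j))) ∘ₗ e.toLinearMap

/-- `V i` is a one-dimensional trivial `g`-module. -/
def IsTrivOneDim (i : D.ι) : Prop :=
  Module.finrank F (D.V i) = 1 ∧ ∀ x : g, (D.ρ i x : Module.End F (D.V i)) = 0

/-- The functional `φ ⊗ ψ` on a tensor product. -/
noncomputable def tensorDual {i j : D.ι} (φ : Module.Dual F (D.V i))
    (ψ : Module.Dual F (D.V j)) : Module.Dual F (D.V i ⊗[F] D.V j) :=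
  TensorProduct.dualDistrib F (D.V i) (D.V j) (φ ⊗ₜ[F] ψ)

/-- The axioms on the pair of categories `C`, `C^du`:
`C` is closed under isomorphism, (binary) direct sums, tensor products, submodules,
contains a one-dimensional trivial module, `g` acts faithfully, and the duals separate points,
are stable under the transposed `g`-action and under transposes of morphisms, and are compatible
with direct sums and tensor products. -/
structure IsGoodSetting : Prop where
  separating : ∀ (i : D.ι) (v : D.V i), v ≠ 0 → ∃ φ ∈ D.du i, φ v ≠ 0
  du_g : ∀ (i : D.ι) (x : g), D.PreservesDu i (D.ρ i x)
  du_hom : ∀ (i j : D.ι) (f : D.V i →ₗ[F] D.V j), D.IsHom f →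
    ∀ ψ ∈ D.du j, f.dualMap ψ ∈ D.du i
  faithful : ∀ x : g, (∀ i, (D.ρ i x : Module.End F (D.V i)) = 0) → x = 0
  exists_triv : ∃ i, D.IsTrivOneDim i
  exists_sum : ∀ i j : D.ι, ∃ (k : D.ι) (e : D.V k ≃ₗ[F] (D.V i × D.V j)), D.IsSumProd i j k e
  exists_tensor : ∀ i j : D.ι,
    ∃ (k : D.ι) (e : D.V k ≃ₗ[F] (D.V i ⊗[F] D.V j)), D.IsTensorProd i j k e
  du_tensor : ∀ (i j k : D.ι) (e : D.V k ≃ₗ[F] (D.V i ⊗[F] D.V j)), D.IsTensorProd i j k e →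
    ∀ φ ∈ D.du i, ∀ ψ ∈ D.du j, e.toLinearMap.dualMap (D.tensorDual φ ψ) ∈ D.du k
  du_sum : ∀ (i j k : D.ι) (e : D.V k ≃ₗ[F] (D.V i × D.V j)), D.IsSumProd i j k e →
    ∀ ξ : Module.Dual F (D.V k), ξ ∈ D.du k ↔
      ∃ φ ∈ D.du i, ∃ ψ ∈ D.du j,
        ξ = e.toLinearMap.dualMap
          ((LinearMap.fst F (D.V i) (D.V j)).dualMap φ +
            (LinearMap.snd F (D.V i) (D.V j)).dualMap ψ)
  submod_closed : ∀ (i : D.ι) (U : Submodule F (D.V i)), (∀ x : g, ∀ u ∈ U, D.ρ i x u ∈ U) →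
    ∃ (k : D.ι) (e : D.V k ≃ₗ[F] ↥U), ∀ (x : g) (v : D.V k),
      (↑(e ((D.ρ k x) v)) : D.V i) = D.ρ i x ↑(e v)
  isoClosed : ∀ (W : Type w) [AddCommGroup W] [Module F W] (ρW : g →ₗ⁅F⁆ Module.End F W)
    (i : D.ι) (e : D.V i ≃ₗ[F] W), (∀ (x : g) (v : D.V i), e (D.ρ i x v) = ρW x (e v)) →
    ∃ (k : D.ι) (e' : D.V k ≃ₗ[F] W), ∀ (x : g) (v : D.V k), e' (D.ρ k x v) = ρW x (e' v)

/-- The algebra `Nat` of natural transformations: families of endomorphisms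
`m i ∈ End_{V^du}(V i)` commuting with all `g`-equivariant maps between objects. -/
def NatAlg : Set (∀ i, Module.End F (D.V i)) :=
  { m | (∀ i, D.PreservesDu i (m i)) ∧
        ∀ (i j : D.ι) (f : D.V i →ₗ[F] D.V j), D.IsHom f → f ∘ₗ m i = m j ∘ₗ f }

/-- The Tannaka monoid `M`: natural transformations compatible with tensor products and
acting as the identity on trivial one-dimensional modules. -/
def M : Set (∀ i, Module.End F (D.V i)) :=
  { m | m ∈ D.NatAlg ∧
        (∀ (i j k : D.ι) (e : D.V k ≃ₗ[F] (D.V i ⊗[F] D.V j)), D.IsTensorProd i j k e →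
          e.toLinearMap ∘ₗ m k = TensorProduct.map (m i) (m j) ∘ₗ e.toLinearMap) ∧
        (∀ i, D.IsTrivOneDim i → m i = 1) }

/-- The matrix coefficient `f_{φ v}` as a function on the Tannaka monoid `M`. -/
def matCoef (i : D.ι) (φ : Module.Dual F (D.V i)) (v : D.V i) : ↥D.M → F :=
  fun m => φ (m.1 i v)

/-- The coordinate ring `F[M]` of matrix coefficients (a set of functions on `M`). -/
def coordRing : Set (↥D.M → F) :=
  { f | ∃ (i : D.ι) (φ : Module.Dual F (D.V i)) (v : D.V i), φ ∈ D.du i ∧ f = D.matCoef i φ v }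

/-- The Lie algebra `Lie(M)` of the Tannaka monoid. -/
def LieM : Set (∀ i, Module.End F (D.V i)) :=
  { x | x ∈ D.NatAlg ∧
        (∀ (i j k : D.ι) (e : D.V k ≃ₗ[F] (D.V i ⊗[F] D.V j)), D.IsTensorProd i j k e →
          e.toLinearMap ∘ₗ x k =
            (TensorProduct.map (x i) LinearMap.id +
              TensorProduct.map LinearMap.id (x j)) ∘ₗ e.toLinearMap) ∧
        (∀ i, D.IsTrivOneDim i → x i = 0) ∧
        (∃ δ : (↥D.M → F) → F, ∀ (i : D.ι) (φ : Module.Dual F (D.V i)) (v : D.V i),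
          φ ∈ D.du i → δ (D.matCoef i φ v) = φ (x i v)) }

/-- The Lie algebra `Lie(N)` of a submonoid `N ⊆ M`: those `x ∈ Lie(M)` whose derivation
`δ_x` annihilates the vanishing ideal `I(N) ⊆ F[M]`. -/
def LieOf (N : Set (↥D.M)) : Set (∀ i, Module.End F (D.V i)) :=
  { x | x ∈ D.LieM ∧ ∀ (i : D.ι) (φ : Module.Dual F (D.V i)) (v : D.V i), φ ∈ D.du i →
      (∀ n ∈ N, D.matCoef i φ v n = 0) → φ (x i v) = 0 }

/-- The unit group `M^×` of the Tannaka monoid, as a subset of `M`. -/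
def unitsSet : Set (↥D.M) :=
  { m | ∃ n : ↥D.M, m.1 * n.1 = 1 ∧ n.1 * m.1 = 1 }

/-- The pair `C`, `C^du` is good for integrating `g`: `g ⊆ Lie(M)`. -/
def Good : Prop := ∀ x : g, (fun i => (D.ρ i x : Module.End F (D.V i))) ∈ D.LieM

/-- The pair `C`, `C^du` is very good for integrating `g`: `g ⊆ Lie(M^×)`. -/
def VeryGood : Prop :=
  ∀ x : g, (fun i => (D.ρ i x : Module.End F (D.V i))) ∈ D.LieOf D.unitsSet

/-- A subset `S ⊆ M` is Zariski dense in `M`. -/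
def DenseIn (S : Set (↥D.M)) : Prop :=
  ∀ f ∈ D.coordRing, (∀ m ∈ S, f m = 0) → ∀ m, f m = 0

theorem one_mem_M : (1 : ∀ i, Module.End F (D.V i)) ∈ D.M := by
  refine ⟨⟨?_, ?_⟩, ?_, ?_⟩
  · intro i φ hφ
    exact hφ
  · intro i j f _
    ext v
    simp
  · intro i j k e _
    ext v
    simp [TensorProduct.map_one]
  · intro i _
    rfl

/-- The unit of the Tannaka monoid as an element of the subtype `↥M`. -/
def oneM : ↥D.M := ⟨1, D.one_mem_M⟩

variable {D}

theorem apply_comm_of_mem_NatAlg {m : ∀ i, Module.End F (D.V i)} (hm : m ∈ D.NatAlg)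
    {i j : D.ι} {f : D.V i →ₗ[F] D.V j} (hf : D.IsHom f) (v : D.V i) : f (m i v) = m j (f v) :=
  LinearMap.congr_fun (hm.2 i j f hf) v

variable (D)

theorem one_mem_NatAlg : (1 : ∀ i, Module.End F (D.V i)) ∈ D.NatAlg :=
  D.one_mem_M.1

theorem mul_mem_NatAlg {m n : ∀ i, Module.End F (D.V i)} (hm : m ∈ D.NatAlg)
    (hn : n ∈ D.NatAlg) : m * n ∈ D.NatAlg := by
  refine ⟨fun i φ hφ => ?_, fun i j f hf => ?_⟩
  · exact hn.1 i _ (hm.1 i φ hφ)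
  · ext v
    change f (m i (n i v)) = m j (n j (f v))
    rw [apply_comm_of_mem_NatAlg hm hf, apply_comm_of_mem_NatAlg hn hf]

theorem M_subset_NatAlg : D.M ⊆ D.NatAlg := fun _ hm => hm.1

theorem mul_mem_M {m n : ∀ i, Module.End F (D.V i)} (hm : m ∈ D.M) (hn : n ∈ D.M) :
    m * n ∈ D.M := by
  refine ⟨D.mul_mem_NatAlg hm.1 hn.1, fun i j k e he => ?_, fun i hi => ?_⟩
  · change e.toLinearMap ∘ₗ (m k ∘ₗ n k) =
      TensorProduct.map (m i ∘ₗ n i) (m j ∘ₗ n j) ∘ₗ e.toLinearMap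
    rw [← LinearMap.comp_assoc, hm.2.1 i j k e he, LinearMap.comp_assoc, hn.2.1 i j k e he,
      ← LinearMap.comp_assoc, ← TensorProduct.map_comp]
  · change m i * n i = 1
    rw [hm.2.2 i hi, hn.2.2 i hi, one_mul]

theorem IsSumProd.isHom_fst {i j k : D.ι} {e : D.V k ≃ₗ[F] (D.V i × D.V j)}
    (he : D.IsSumProd i j k e) : D.IsHom (LinearMap.fst F (D.V i) (D.V j) ∘ₗ e.toLinearMap) :=
  fun x => LinearMap.ext fun u => by
    simpa using congrArg Prod.fst (LinearMap.congr_fun (he x) u)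

theorem IsSumProd.isHom_snd {i j k : D.ι} {e : D.V k ≃ₗ[F] (D.V i × D.V j)}
    (he : D.IsSumProd i j k e) : D.IsHom (LinearMap.snd F (D.V i) (D.V j) ∘ₗ e.toLinearMap) :=
  fun x => LinearMap.ext fun u => by
    simpa using congrArg Prod.snd (LinearMap.congr_fun (he x) u)

theorem matCoef_of_isTrivOneDim {i : D.ι} (hi : D.IsTrivOneDim i) (φ : Module.Dual F (D.V i))
    (v : D.V i) : D.matCoef i φ v = fun _ => φ v := by
  funext m
  simp only [matCoef, m.2.2.2 i hi, Module.End.one_apply]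

theorem smul_matCoef (c : F) (i : D.ι) (φ : Module.Dual F (D.V i)) (v : D.V i) :
    c • D.matCoef i φ v = D.matCoef i (c • φ) v :=
  rfl

theorem matCoef_add_matCoef {i j k : D.ι} {e : D.V k ≃ₗ[F] (D.V i × D.V j)}
    (he : D.IsSumProd i j k e) (φ : Module.Dual F (D.V i)) (ψ : Module.Dual F (D.V j))
    (v : D.V i) (w : D.V j) :
    D.matCoef i φ v + D.matCoef j ψ w =
      D.matCoef k (e.toLinearMap.dualMap ((LinearMap.fst F (D.V i) (D.V j)).dualMap φ +
        (LinearMap.snd F (D.V i) (D.V j)).dualMap ψ)) (e.symm (v, w)) := by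
  funext m
  have hfst := apply_comm_of_mem_NatAlg m.2.1 he.isHom_fst (e.symm (v, w))
  have hsnd := apply_comm_of_mem_NatAlg m.2.1 he.isHom_snd (e.symm (v, w))
  simp only [LinearMap.comp_apply, LinearEquiv.coe_coe, LinearEquiv.apply_symm_apply,
    LinearMap.fst_apply, LinearMap.snd_apply] at hfst hsnd
  simp [matCoef, LinearMap.dualMap_apply, hfst, hsnd]

theorem matCoef_mul_matCoef {i j k : D.ι} {e : D.V k ≃ₗ[F] (D.V i ⊗[F] D.V j)}
    (he : D.IsTensorProd i j k e) (φ : Module.Dual F (D.V i)) (ψ : Module.Dual F (D.V j))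
    (v : D.V i) (w : D.V j) :
    D.matCoef i φ v * D.matCoef j ψ w =
      D.matCoef k (e.toLinearMap.dualMap (D.tensorDual φ ψ)) (e.symm (v ⊗ₜ w)) := by
  funext m
  have hm : e (m.1 k (e.symm (v ⊗ₜ w))) = m.1 i v ⊗ₜ[F] m.1 j w := by
    simpa using LinearMap.congr_fun (m.2.2.1 i j k e he) (e.symm (v ⊗ₜ w))
  simp [matCoef, tensorDual, LinearMap.dualMap_apply, hm]

theorem matCoef_mul_left (m₀ m : ↥D.M) (hmem : m₀.1 * m.1 ∈ D.M) (i : D.ι)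
    (φ : Module.Dual F (D.V i)) (v : D.V i) :
    D.matCoef i φ v ⟨m₀.1 * m.1, hmem⟩ = D.matCoef i ((m₀.1 i).dualMap φ) v m :=
  rfl

theorem matCoef_mul_right (m₀ m : ↥D.M) (hmem : m.1 * m₀.1 ∈ D.M) (i : D.ι)
    (φ : Module.Dual F (D.V i)) (v : D.V i) :
    D.matCoef i φ v ⟨m.1 * m₀.1, hmem⟩ = D.matCoef i φ (m₀.1 i v) m :=
  rfl

variable {D}

theorem smul_mem_coordRing {f : ↥D.M → F} (hf : f ∈ D.coordRing) (c : F) :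
    c • f ∈ D.coordRing := by
  obtain ⟨i, φ, v, hφ, rfl⟩ := hf
  exact ⟨i, c • φ, v, Submodule.smul_mem _ _ hφ, D.smul_matCoef c i φ v⟩

theorem IsGoodSetting.one_mem_coordRing (HG : D.IsGoodSetting) :
    (1 : ↥D.M → F) ∈ D.coordRing := by
  obtain ⟨i, hi⟩ := HG.exists_triv
  have : Nontrivial (D.V i) := Module.nontrivial_of_finrank_pos (by rw [hi.1]; exact one_pos)
  obtain ⟨v, hv⟩ := exists_ne (0 : D.V i)
  obtain ⟨φ, hφ, hφv⟩ := HG.separating i v hv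
  refine ⟨i, (φ v)⁻¹ • φ, v, Submodule.smul_mem _ _ hφ, ?_⟩
  rw [D.matCoef_of_isTrivOneDim hi]
  funext _
  simp [inv_mul_cancel₀ hφv]

theorem IsGoodSetting.add_mem_coordRing (HG : D.IsGoodSetting) {f h : ↥D.M → F}
    (hf : f ∈ D.coordRing) (hh : h ∈ D.coordRing) : f + h ∈ D.coordRing := by
  obtain ⟨i, φ, v, hφ, rfl⟩ := hf
  obtain ⟨j, ψ, w, hψ, rfl⟩ := hh
  obtain ⟨k, e, he⟩ := HG.exists_sum i j
  exact ⟨k, _, _, (HG.du_sum i j k e he _).2 ⟨φ, hφ, ψ, hψ, rfl⟩,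
    D.matCoef_add_matCoef he φ ψ v w⟩

theorem IsGoodSetting.mul_mem_coordRing (HG : D.IsGoodSetting) {f h : ↥D.M → F}
    (hf : f ∈ D.coordRing) (hh : h ∈ D.coordRing) : f * h ∈ D.coordRing := by
  obtain ⟨i, φ, v, hφ, rfl⟩ := hf
  obtain ⟨j, ψ, w, hψ, rfl⟩ := hh
  obtain ⟨k, e, he⟩ := HG.exists_tensor i j
  exact ⟨k, _, _, HG.du_tensor i j k e he φ hφ ψ hψ, D.matCoef_mul_matCoef he φ ψ v w⟩

theorem IsGoodSetting.eq_of_forall_coordRing_eq (HG : D.IsGoodSetting) {m n : ↥D.M}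
    (hmn : ∀ f ∈ D.coordRing, f m = f n) : m = n := by
  refine Subtype.ext (funext fun i => LinearMap.ext fun v => ?_)
  by_contra hne
  obtain ⟨φ, hφ, hφd⟩ := HG.separating i _ (sub_ne_zero.mpr hne)
  exact hφd (by rw [map_sub, sub_eq_zero]; exact hmn _ ⟨i, φ, v, hφ, rfl⟩)

end TannakaSetting

open TensorProduct

variable {F : Type u} [Field F] [CharZero F] {g : Type v} [LieRing g] [LieAlgebra F g]

/-- **The Tannaka monoid and its coordinate ring of matrix coefficients.**
`M` is a submonoid of the multiplicative monoid of the algebra `Nat`; the set `F[M]` of all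
matrix coefficients is a point-separating algebra of `F`-valued functions on `M`; and for every
`m ∈ M` the left and right multiplication maps admit comorphisms of `F[M]`, so that
`(π(m₁, m₂) f)(m) := f (m₁ m m₂)` defines an action of `Mᵒᵖ × M` on `F[M]` by algebra
endomorphisms. -/
theorem stmt_1 (D : TannakaSetting F g) (HG : D.IsGoodSetting) :
    -- `Nat` is a monoid and `M` is a submonoid of `Nat`:
    ((1 : ∀ i, Module.End F (D.V i)) ∈ D.NatAlg ∧
      (∀ m ∈ D.NatAlg, ∀ n ∈ D.NatAlg, m * n ∈ D.NatAlg) ∧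
      D.M ⊆ D.NatAlg ∧
      (1 : ∀ i, Module.End F (D.V i)) ∈ D.M ∧
      (∀ m ∈ D.M, ∀ n ∈ D.M, m * n ∈ D.M)) ∧
    -- `F[M]` is an algebra of functions on `M`:
    ((1 : ↥D.M → F) ∈ D.coordRing ∧
      (∀ f ∈ D.coordRing, ∀ h ∈ D.coordRing, f + h ∈ D.coordRing) ∧
      (∀ f ∈ D.coordRing, ∀ c : F, c • f ∈ D.coordRing) ∧
      (∀ f ∈ D.coordRing, ∀ h ∈ D.coordRing, f * h ∈ D.coordRing)) ∧
    -- `F[M]` separates the points of `M`: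
    (∀ m n : ↥D.M, (∀ f ∈ D.coordRing, f m = f n) → m = n) ∧
    -- the left and right multiplications by elements of `M` admit comorphisms of `F[M]`:
    (∀ m₀ : ↥D.M, ∀ f ∈ D.coordRing,
      (∃ h ∈ D.coordRing, ∀ (m : ↥D.M) (hmem : m₀.1 * m.1 ∈ D.M),
        h m = f ⟨m₀.1 * m.1, hmem⟩) ∧
      (∃ h ∈ D.coordRing, ∀ (m : ↥D.M) (hmem : m.1 * m₀.1 ∈ D.M),
        h m = f ⟨m.1 * m₀.1, hmem⟩)) := by
  refine ⟨⟨D.one_mem_NatAlg, fun m hm n hn => D.mul_mem_NatAlg hm hn, D.M_subset_NatAlg,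
      D.one_mem_M, fun m hm n hn => D.mul_mem_M hm hn⟩,
    ⟨HG.one_mem_coordRing, fun f hf h hh => HG.add_mem_coordRing hf hh,
      fun f hf c => TannakaSetting.smul_mem_coordRing hf c,
      fun f hf h hh => HG.mul_mem_coordRing hf hh⟩,
    fun m n => HG.eq_of_forall_coordRing_eq, ?_⟩
  rintro m₀ f ⟨i, φ, v, hφ, rfl⟩
  exact ⟨⟨_, ⟨i, _, v, m₀.2.1.1 i φ hφ, rfl⟩,
      fun m hmem => (D.matCoef_mul_left m₀ m hmem i φ v).symm⟩,
    ⟨_, ⟨i, φ, _, hφ, rfl⟩,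
      fun m hmem => (D.matCoef_mul_right m₀ m hmem i φ v).symm⟩⟩
end

section
/- Assume the pair C, C^du is good for integrating g. Then C(M) ∩ M^× = {m ∈ M^× : m x m^{-1} = x for all x ∈ Lie(M)}, i.e. C(M) ∩ M^× is exactly the kernel of the adjoint (conjugation) action of the unit group M^× on Lie(M). If moreover the pair C, C^du is very good for integrating g, then this kernel coincides with C(M^×). -/
open TensorProduct

universe u v w

attribute [local instance] LieRing.ofAssociativeRing

open TensorProduct

variable {F : Type u} [Field F] [CharZero F] {g : Type v} [LieRing g] [LieAlgebra F g]

/-!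
If `m ∈ M` commutes with every element of a subset `N ⊆ M`, it commutes with every `x ∈ Lie(N)`:
on `V ⊕ V`, the functional `(m^T φ, -φ)` and the vector `(v, m v)` have the matrix coefficient
`u ↦ φ((m u - u m) v)`, which vanishes on `N` and is therefore killed by `δ_x`; as `V^du` separates
points, `m x = x m`. For the first statement take `N = M` (every `δ_x` kills the zero function,
so `Lie(M) = Lie(N)` for `N = M`), for the second `N = M^×`. Conversely, an `m` commuting with
the image of `g` acts by `g`-module maps, so it commutes with every element of `Nat`.
-/

namespace TannakaSetting

variable {F : Type u} [Field F] {g : Type v} [LieRing g] [LieAlgebra F g]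
variable (D : TannakaSetting F g)

def gAction (x : g) : ∀ i, Module.End F (D.V i) := fun i => D.ρ i x

variable {D}

theorem eq_of_forall_du_apply_eq (HG : D.IsGoodSetting) {i : D.ι} {w w' : D.V i}
    (h : ∀ φ ∈ D.du i, φ w = φ w') : w = w' := by
  by_contra hne
  obtain ⟨φ, hφ, hφne⟩ := HG.separating i (w - w') (sub_ne_zero.mpr hne)
  exact hφne (by rw [map_sub, h φ hφ, sub_self])

theorem mul_comm_of_commute_gAction {m p : ∀ i, Module.End F (D.V i)}
    (hm : ∀ x : g, m * D.gAction x = D.gAction x * m) (hp : p ∈ D.NatAlg) :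
    m * p = p * m := by
  funext i
  have hmi : D.IsHom (m i) := fun x => congrFun (hm x) i
  exact hp.2 i i (m i) hmi

theorem lieM_subset_lieOf_univ : D.LieM ⊆ D.LieOf Set.univ := by
  rintro x hx
  refine ⟨hx, fun i φ v hφ hvanish => ?_⟩
  obtain ⟨δ, hδ⟩ := hx.2.2.2
  have hzero : D.matCoef i φ v = D.matCoef i 0 0 := funext fun n => hvanish n trivial
  rw [← hδ i φ v hφ, hzero, hδ i 0 0 (zero_mem _), map_zero, LinearMap.zero_apply]

namespace IsSumProd

variable {i j k : D.ι} {e : D.V k ≃ₗ[F] (D.V i × D.V j)}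

theorem isHom_fst_comp (he : D.IsSumProd i j k e) :
    D.IsHom (LinearMap.fst F (D.V i) (D.V j) ∘ₗ e.toLinearMap) := by
  intro x
  rw [LinearMap.comp_assoc, he x]
  rfl

theorem isHom_snd_comp (he : D.IsSumProd i j k e) :
    D.IsHom (LinearMap.snd F (D.V i) (D.V j) ∘ₗ e.toLinearMap) := by
  intro x
  rw [LinearMap.comp_assoc, he x]
  rfl

theorem apply_symm_of_mem_natAlg (he : D.IsSumProd i j k e) {u : ∀ i, Module.End F (D.V i)}
    (hu : u ∈ D.NatAlg) (v : D.V i) (w : D.V j) :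
    e (u k (e.symm (v, w))) = (u i v, u j w) := by
  have hfst := LinearMap.congr_fun (hu.2 k i _ he.isHom_fst_comp) (e.symm (v, w))
  have hsnd := LinearMap.congr_fun (hu.2 k j _ he.isHom_snd_comp) (e.symm (v, w))
  simp only [LinearMap.coe_comp, Function.comp_apply, LinearEquiv.coe_coe,
    LinearEquiv.apply_symm_apply, LinearMap.fst_apply, LinearMap.snd_apply] at hfst hsnd
  exact Prod.ext hfst hsnd

end IsSumProd

theorem exists_matCoef_eq_commutator (HG : D.IsGoodSetting) {m : ∀ i, Module.End F (D.V i)}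
    (hm : ∀ i, D.PreservesDu i (m i)) {i : D.ι} {φ : Module.Dual F (D.V i)} (hφ : φ ∈ D.du i)
    (v : D.V i) :
    ∃ (k : D.ι) (ξ : Module.Dual F (D.V k)) (w : D.V k), ξ ∈ D.du k ∧
      ∀ u ∈ D.NatAlg, ξ (u k w) = φ (m i (u i v)) - φ (u i (m i v)) := by
  obtain ⟨k, e, he⟩ := HG.exists_sum i i
  refine ⟨k, e.toLinearMap.dualMap ((LinearMap.fst F (D.V i) (D.V i)).dualMap ((m i).dualMap φ) +
      (LinearMap.snd F (D.V i) (D.V i)).dualMap (-φ)), e.symm (v, m i v), ?_, fun u hu => ?_⟩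
  · exact (HG.du_sum i i k e he _).mpr ⟨_, hm i φ hφ, -φ, neg_mem hφ, rfl⟩
  · simp only [LinearMap.dualMap_apply, LinearEquiv.coe_coe, he.apply_symm_of_mem_natAlg hu,
      LinearMap.add_apply, LinearMap.fst_apply, LinearMap.snd_apply, LinearMap.neg_apply]
    ring

theorem mul_comm_of_mem_lieOf (HG : D.IsGoodSetting) {m x : ∀ i, Module.End F (D.V i)}
    (hm : ∀ i, D.PreservesDu i (m i)) {N : Set ↥D.M} (hN : ∀ n ∈ N, m * n.1 = n.1 * m)
    (hx : x ∈ D.LieOf N) : m * x = x * m := by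
  funext i
  refine LinearMap.ext fun v => eq_of_forall_du_apply_eq HG fun φ hφ => ?_
  obtain ⟨k, ξ, w, hξ, hcomm⟩ := exists_matCoef_eq_commutator HG hm hφ v
  have hvanish : ∀ n ∈ N, D.matCoef k ξ w n = 0 := fun n hn => by
    have hmn := LinearMap.congr_fun (congrFun (hN n hn) i) v
    rw [matCoef, hcomm n.1 n.2.1]
    exact sub_eq_zero.mpr (congrArg φ hmn)
  have hx0 := hx.2 k ξ w hξ hvanish
  rw [hcomm x hx.1.1] at hx0
  exact sub_eq_zero.mp hx0

end TannakaSetting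

/-- **The kernel of the adjoint action of `M^×` on `Lie(M)`.**
Assume the pair `C`, `C^du` is good for integrating `g`.  Then for every unit `m ∈ M^×`,
`m` lies in the center `C(M)` of `M` if and only if `m x m⁻¹ = x` for all `x ∈ Lie(M)`;
i.e. `C(M) ∩ M^×` is the kernel of the adjoint action of `M^×` on `Lie(M)`.
If moreover the pair is very good for integrating `g`, then for every unit `m ∈ M^×`,
`m` is central in `M` if and only if `m` is central in `M^×`; i.e. the kernel coincides
with `C(M^×)`. -/
theorem stmt_5 (D : TannakaSetting F g) (HG : D.IsGoodSetting) (hGood : D.Good) :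
    (∀ m ∈ D.M, (∃ n ∈ D.M, m * n = 1 ∧ n * m = 1) →
      ((∀ p ∈ D.M, m * p = p * m) ↔
        (∀ n ∈ D.M, m * n = 1 → n * m = 1 → ∀ x ∈ D.LieM, m * x * n = x))) ∧
    (D.VeryGood →
      ∀ m ∈ D.M, (∃ n ∈ D.M, m * n = 1 ∧ n * m = 1) →
        ((∀ p ∈ D.M, m * p = p * m) ↔
          (∀ p ∈ D.M, (∃ q ∈ D.M, p * q = 1 ∧ q * p = 1) → m * p = p * m))) := by
  refine ⟨fun m hm ⟨n, hn, hmn, hnm⟩ => ⟨fun hcentral n' _ hmn' _ x hx => ?_, fun hconj p hp => ?_⟩,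
    fun hVG m hm _ => ⟨fun hcentral p hp _ => hcentral p hp, fun hunits p hp => ?_⟩⟩
  · have hmx : m * x = x * m := TannakaSetting.mul_comm_of_mem_lieOf HG hm.1.1
      (fun u _ => hcentral u.1 u.2) (TannakaSetting.lieM_subset_lieOf_univ hx)
    rw [hmx, mul_assoc, hmn', mul_one]
  · refine TannakaSetting.mul_comm_of_commute_gAction (fun x => ?_) hp.1
    calc m * D.gAction x = m * D.gAction x * n * m := by rw [mul_assoc _ n, hnm, mul_one]
      _ = D.gAction x * m := by rw [hconj n hn hmn hnm (D.gAction x) (hGood x)]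
  · refine TannakaSetting.mul_comm_of_commute_gAction (fun x => ?_) hp.1
    refine TannakaSetting.mul_comm_of_mem_lieOf HG hm.1.1 (fun u hu => ?_) (hVG x)
    obtain ⟨q, hq, hq'⟩ := hu
    exact hunits u.1 u.2 ⟨q.1, q.2, hq, hq'⟩
end

section
/- Assume the pair C, C^du is good for integrating g. Let V be a g-module contained in C, equipped with the Zariski topology determined by the coordinate ring F[V] generated by the linear functions in V^du. Then every M-invariant linear subspace U of V which is closed in this Zariski topology is also g-invariant, i.e. x_V(U) ⊆ U for every x ∈ g. -/
open TensorProduct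

attribute [local instance 100] LieRing.ofAssociativeRing

universe u v w

/-!
For `x ∈ g`, `u ∈ U` and `φ ∈ V^du` vanishing on `U`, the matrix coefficient `f_{φu}`
vanishes on `M` because `M` preserves `U`, so it is the function `f_{0u}` and
`φ (x u) = δ_x f_{φu} = δ_x f_{0u} = 0`. Thus `x u` lies in the closure of `U` for the weak
topology of `V^du`, which is contained in its Zariski closure: a polynomial in `V^du` involves
only finitely many functionals, spanning some finite-dimensional `S`, and
`(U^⊥ ∩ S)^⊥ = U + S^⊥`.
-/

namespace Subspace

variable {K V : Type*} [Field K] [AddCommGroup V] [Module K V]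
  {du : Submodule K (Module.Dual K V)}

theorem dualCoannihilator_dualAnnihilator_inf (U : Subspace K V)
    (S : Subspace K (Module.Dual K V)) [FiniteDimensional K S] :
    (U.dualAnnihilator ⊓ S).dualCoannihilator = U ⊔ S.dualCoannihilator := by
  rw [← dualCoannihilator_dualAnnihilator_eq (W := S), ← Submodule.dualAnnihilator_sup_eq,
    dualAnnihilator_dualCoannihilator_eq, dualCoannihilator_dualAnnihilator_eq]

def DependsOnFinitelyMany (du : Submodule K (Module.Dual K V)) (p : V → K) : Prop :=
  ∃ s : Finset (Module.Dual K V), ↑s ⊆ (du : Set (Module.Dual K V)) ∧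
    ∀ v w, (∀ φ ∈ s, φ v = φ w) → p v = p w

theorem DependsOnFinitelyMany.map₂ {p q : V → K}
    (hp : DependsOnFinitelyMany du p) (hq : DependsOnFinitelyMany du q) (op : K → K → K) :
    DependsOnFinitelyMany du fun v => op (p v) (q v) := by
  classical
  obtain ⟨s, hs, hps⟩ := hp
  obtain ⟨t, ht, hqt⟩ := hq
  refine ⟨s ∪ t, by simpa using ⟨hs, ht⟩, fun v w h => ?_⟩
  dsimp only
  rw [hps v w fun φ hφ => h φ (Finset.mem_union_left t hφ),
    hqt v w fun φ hφ => h φ (Finset.mem_union_right s hφ)]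

theorem dependsOnFinitelyMany_of_mem_adjoin {p : V → K}
    (hp : p ∈ Algebra.adjoin K {q : V → K | ∃ φ ∈ du, q = fun w => φ w}) :
    DependsOnFinitelyMany du p := by
  induction hp using Algebra.adjoin_induction with
  | mem q hq =>
    obtain ⟨φ, hφ, rfl⟩ := hq
    exact ⟨{φ}, by simpa using hφ, fun v w h => h φ (Finset.mem_singleton_self φ)⟩
  | algebraMap _ => exact ⟨∅, by simp, fun _ _ _ => rfl⟩
  | add p q _ _ hp hq => exact hp.map₂ hq (· + ·)
  | mul p q _ _ hp hq => exact hp.map₂ hq (· * ·)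

theorem apply_eq_zero_of_mem_dualCoannihilator {U : Subspace K V} {p : V → K}
    (hp : p ∈ Algebra.adjoin K {q : V → K | ∃ φ ∈ du, q = fun w => φ w})
    (hpU : ∀ u ∈ U, p u = 0) {v : V} (hv : v ∈ (U.dualAnnihilator ⊓ du).dualCoannihilator) :
    p v = 0 := by
  obtain ⟨s, hsdu, hps⟩ := dependsOnFinitelyMany_of_mem_adjoin hp
  have hv' : v ∈ (U.dualAnnihilator ⊓ Submodule.span K ↑s).dualCoannihilator :=
    Submodule.dualCoannihilator_anti (inf_le_inf_left _ (Submodule.span_le.mpr hsdu)) hv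
  rw [dualCoannihilator_dualAnnihilator_inf] at hv'
  obtain ⟨u, hu, k, hk, rfl⟩ := Submodule.mem_sup.mp hv'
  rw [hps (u + k) u fun φ hφ => ?_]
  · exact hpU u hu
  rw [map_add, (Submodule.mem_dualCoannihilator k).mp hk φ (Submodule.subset_span hφ), add_zero]

end Subspace

namespace TannakaSetting

variable {F : Type u} [Field F] {g : Type v} [LieRing g] [LieAlgebra F g] {D : TannakaSetting F g}

theorem apply_mem_dualCoannihilator_of_mem_LieM {x : ∀ i, Module.End F (D.V i)}
    (hx : x ∈ D.LieM) {i : D.ι} {U : Submodule F (D.V i)} (hInv : ∀ m ∈ D.M, ∀ u ∈ U, m i u ∈ U)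
    {u : D.V i} (hu : u ∈ U) : x i u ∈ (U.dualAnnihilator ⊓ D.du i).dualCoannihilator := by
  obtain ⟨-, -, -, δ, hδ⟩ := hx
  rw [Submodule.mem_dualCoannihilator]
  rintro φ ⟨hφU, hφ⟩
  have hcoef : D.matCoef i φ u = D.matCoef i 0 u := by
    funext m
    exact (Submodule.mem_dualAnnihilator φ).mp hφU _ (hInv m.1 m.2 u hu)
  rw [← hδ i φ u hφ, hcoef, hδ i 0 u (zero_mem _), LinearMap.zero_apply]

end TannakaSetting

open TensorProduct

variable {F : Type u} [Field F] [CharZero F] {g : Type v} [LieRing g] [LieAlgebra F g]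

theorem stmt_6_general (D : TannakaSetting F g) (hGood : D.Good)
    (i : D.ι) (U : Submodule F (D.V i))
    (hInv : ∀ m ∈ D.M, ∀ u ∈ U, m i u ∈ U)
    (hClosed : ∀ v : D.V i,
      (∀ p : D.V i → F,
        p ∈ Algebra.adjoin F {q : D.V i → F | ∃ φ ∈ D.du i, q = fun w => φ w} →
        (∀ u ∈ U, p u = 0) → p v = 0) → v ∈ U) :
    ∀ x : g, ∀ u ∈ U, D.ρ i x u ∈ U := by
  intro x u hu
  refine hClosed _ fun p hp hpU => ?_
  exact Subspace.apply_eq_zero_of_mem_dualCoannihilator hp hpU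
    (TannakaSetting.apply_mem_dualCoannihilator_of_mem_LieM (hGood x) hInv hu)

/-- **Zariski closed `M`-invariant subspaces are `g`-invariant.**
Assume the pair `C`, `C^du` is good for integrating `g`.  Let `V` be a `g`-module contained in
`C`, equipped with the Zariski topology determined by the coordinate ring `F[V]` generated by
the linear functions in `V^du`.  Then every `M`-invariant linear subspace `U` of `V` which is
closed in this topology is also `g`-invariant. -/
theorem stmt_6 (D : TannakaSetting F g) (HG : D.IsGoodSetting) (hGood : D.Good)
    (i : D.ι) (U : Submodule F (D.V i))
    (hInv : ∀ m ∈ D.M, ∀ u ∈ U, m i u ∈ U)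
    (hClosed : ∀ v : D.V i,
      (∀ p : D.V i → F,
        p ∈ Algebra.adjoin F {q : D.V i → F | ∃ φ ∈ D.du i, q = fun w => φ w} →
        (∀ u ∈ U, p u = 0) → p v = 0) → v ∈ U) :
    ∀ x : g, ∀ u ∈ U, D.ρ i x u ∈ U :=
  stmt_6_general D hGood i U hInv hClosed
end

section
/- Let A be a saturated submonoid of a free Z-module of finite rank and let F be a field of characteristic zero. For a face F' of A, let T(F') := {α ∈ Ã : α^{-1}(F^×) = F'} and let e(F') ∈ Ã be given by e(F')(λ) = 1 for λ ∈ F' and e(F')(λ) = 0 for λ ∈ A∖F'. Then: (1) T(A) is the unit group of the monoid Ã, the set of idempotents of Ã is exactly E := {e(F') : F' a face of A}, and Ã = T(A)·E = E·T(A). (2) For every face F', T(F') is a subgroup of Ã with unit e(F'), isomorphic to the torus Hom((F'−F',+),(F^×,·)) via the map Φ_{F'} sending α to the element of Ã equal to α on F' and 0 on A∖F'; the sets T(F'), F' a face of A, are exactly the orbits of the left-multiplication action of T(A) on Ã. (3) The Zariski closure of T(F') in Ã equals the union of T(G) over all faces G of the monoid F'; for every λ in the relative interior of a face F' (i.e.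 F' is the smallest face of A containing λ), the principal open set D(λ) := {α ∈ Ã : α(λ) ≠ 0} equals the union of T(G) over all faces G of A with G ⊇ F'; in particular T(A) is a principal open dense subset of Ã. -/
open scoped Classical

universe u v

section GeneralizedToricMonoid

variable (F : Type u) [Field F] {L : Type v} [AddCommGroup L]

/-- `α : A → F` is a character of the abelian monoid `(A, +)` with values in the
multiplicative monoid `(F, ·)`; the set of all of these is the monoid `Ã`. -/
def IsChar (A : AddSubmonoid L) (α : ↥A → F) : Prop :=
  α 0 = 1 ∧ ∀ a b : ↥A, α (a + b) = α a * α b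

/-- `G` is a face of the submonoid `B`:  `G` is a submonoid of `B` with
`(B ∖ G) + B ⊆ B ∖ G`. -/
def IsFaceOf (B G : AddSubmonoid L) : Prop :=
  G ≤ B ∧ ∀ a ∈ B, ∀ b ∈ B, a + b ∈ G → a ∈ G

/-- The subset `T(G) = {α ∈ Ã : α⁻¹(F^×) = G}` of `Ã`. -/
def TSet (A G : AddSubmonoid L) : Set (↥A → F) :=
  { α | IsChar F A α ∧ ∀ a : ↥A, (α a ≠ 0 ↔ (a : L) ∈ G) }

/-- The idempotent `e(G) ∈ Ã`, equal to `1` on `G` and `0` off `G`. -/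
noncomputable def eChar (A G : AddSubmonoid L) : ↥A → F :=
  fun a => if (a : L) ∈ G then 1 else 0

/-- The Zariski closure of a set of characters, with respect to the coordinate ring on `Ã`
given by the monoid algebra `F[A]` (spanned by the evaluation functions `α ↦ α(λ)`). -/
def ZClos (A : AddSubmonoid L) (S : Set (↥A → F)) : Set (↥A → F) :=
  { α | IsChar F A α ∧ ∀ (n : ℕ) (c : Fin n → F) (lam : Fin n → ↥A),
      (∀ β ∈ S, ∑ k, c k * β (lam k) = 0) → ∑ k, c k * α (lam k) = 0 }

/-- A character of the group generated by `G` with values in `F^×`; the group of all of these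
is the torus `Hom(G − G, F^×)`. -/
def IsGrpChar (G : AddSubmonoid L) (γ : ↥(AddSubgroup.closure (G : Set L)) → F) : Prop :=
  γ 0 = 1 ∧ (∀ a b, γ (a + b) = γ a * γ b) ∧ ∀ a, γ a ≠ 0

/-- The map `Φ_G` from the torus `Hom(G − G, F^×)` to `Ã`, sending `γ` to the character equal
to `γ` on `G` and `0` off `G`. -/
noncomputable def PhiFun (A G : AddSubmonoid L)
    (γ : ↥(AddSubgroup.closure (G : Set L)) → F) : ↥A → F :=
  fun a => if h : (a : L) ∈ G then γ ⟨(a : L), AddSubgroup.subset_closure h⟩ else 0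

end GeneralizedToricMonoid

/-! A character `α ∈ Ã` is supported on a face `G` of `A`, i.e. `α ∈ T(G)`, and on `G` it is a
torus character: it extends uniquely to `G - G`. Saturation of `A` makes `G - G` a direct summand
of `L`, so `α` is the restriction of a unit `t ∈ T(A)`: `α = t · e(G)`. This gives the unit group,
the idempotents, `Ã = T(A) E` and the orbits. For the Zariski closure, characters `2 ^ ψ` with
`ψ : L → ℤ` linear separate the points of `L` (characteristic zero), so by Dedekind's independence
of characters a polynomial vanishing on `T(G)` has cancelling coefficients on `G`, and hence
vanishes at every character supported in `G`. -/

namespace IsFaceOf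

variable {L : Type v} [AddCommGroup L] {A G G' : AddSubmonoid L}

lemma refl (A : AddSubmonoid L) : IsFaceOf A A := ⟨le_rfl, fun _ ha _ _ _ => ha⟩

lemma add_mem_iff (hG : IsFaceOf A G) {a b : L} (ha : a ∈ A) (hb : b ∈ A) :
    a + b ∈ G ↔ a ∈ G ∧ b ∈ G :=
  ⟨fun h => ⟨hG.2 a ha b hb h, hG.2 b hb a ha (by rwa [add_comm])⟩,
    fun h => G.add_mem h.1 h.2⟩

lemma of_le (hG' : IsFaceOf A G') (hle : G' ≤ G) (hG : G ≤ A) : IsFaceOf G G' :=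
  ⟨hle, fun a ha b hb hab => hG'.2 a (hG ha) b (hG hb) hab⟩

lemma mem_of_nsmul_mem (hG : IsFaceOf A G) {a : L} (ha : a ∈ A) {n : ℕ} (hn : n ≠ 0)
    (h : n • a ∈ G) : a ∈ G := by
  obtain ⟨m, rfl⟩ := Nat.exists_eq_succ_of_ne_zero hn
  rw [succ_nsmul'] at h
  exact hG.2 a ha _ (AddSubmonoid.nsmul_mem A ha m) h

end IsFaceOf

section Closure

variable {L : Type v} [AddCommGroup L] {A G : AddSubmonoid L}

lemma exists_sub_of_mem_closure {x : L} (hx : x ∈ AddSubgroup.closure (G : Set L)) :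
    ∃ a ∈ G, ∃ b ∈ G, x = a - b := by
  induction hx using AddSubgroup.closure_induction with
  | mem x hx => exact ⟨x, hx, 0, G.zero_mem, (sub_zero x).symm⟩
  | zero => exact ⟨0, G.zero_mem, 0, G.zero_mem, (sub_zero 0).symm⟩
  | add x y _ _ hx hy =>
    obtain ⟨a, ha, b, hb, rfl⟩ := hx
    obtain ⟨c, hc, d, hd, rfl⟩ := hy
    exact ⟨a + c, G.add_mem ha hc, b + d, G.add_mem hb hd, by abel⟩
  | neg x _ hx =>
    obtain ⟨a, ha, b, hb, rfl⟩ := hx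
    exact ⟨b, hb, a, ha, (neg_sub a b)⟩

lemma IsFaceOf.mem_of_mem_closure (hG : IsFaceOf A G) {a : L} (ha : a ∈ A)
    (h : a ∈ AddSubgroup.closure (G : Set L)) : a ∈ G := by
  obtain ⟨g, hg, g', hg', rfl⟩ := exists_sub_of_mem_closure h
  exact hG.2 _ ha g' (hG.1 hg') (by rwa [sub_add_cancel])

lemma IsFaceOf.closure_saturated (hsat : ∀ (x : L) (n : ℕ), n ≠ 0 → n • x ∈ A → x ∈ A)
    (hG : IsFaceOf A G) (x : L) (n : ℕ) (hn : n ≠ 0)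
    (hx : n • x ∈ AddSubgroup.closure (G : Set L)) : x ∈ AddSubgroup.closure (G : Set L) := by
  obtain ⟨g, hg, g', hg', hx⟩ := exists_sub_of_mem_closure hx
  obtain ⟨m, rfl⟩ := Nat.exists_eq_succ_of_ne_zero hn
  have key : (m + 1) • (x + g') = g + m • g' := by rw [smul_add, hx, succ_nsmul]; abel
  have hxA : x + g' ∈ A := hsat _ _ hn (key ▸ A.add_mem (hG.1 hg) (A.nsmul_mem (hG.1 hg') m))
  have hxG : x + g' ∈ G := hG.mem_of_nsmul_mem hxA hn (key ▸ G.add_mem hg (G.nsmul_mem hg' m))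
  simpa using sub_mem (AddSubgroup.subset_closure hxG) (AddSubgroup.subset_closure hg')

end Closure

section MinFace

variable {L : Type v} [AddCommGroup L] {A G : AddSubmonoid L}

/-- For `l ∈ A`, the smallest face of `A` containing `l`. -/
def minFace (A : AddSubmonoid L) (l : L) : AddSubmonoid L where
  carrier := {x | x ∈ A ∧ ∃ b ∈ A, ∃ n : ℕ, x + b = n • l}
  zero_mem' := ⟨A.zero_mem, 0, A.zero_mem, 0, by simp⟩
  add_mem' := by
    rintro x y ⟨hx, b, hb, n, hn⟩ ⟨hy, c, hc, m, hm⟩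
    exact ⟨A.add_mem hx hy, b + c, A.add_mem hb hc, n + m, by rw [add_smul, ← hn, ← hm]; abel⟩

lemma minFace_isFace (A : AddSubmonoid L) (l : L) : IsFaceOf A (minFace A l) :=
  ⟨fun _ hx => hx.1, fun a ha b hb ⟨_, c, hc, n, hn⟩ =>
    ⟨ha, b + c, A.add_mem hb hc, n, by rw [← hn]; abel⟩⟩

lemma minFace_le (hG : IsFaceOf A G) {l : L} (hl : l ∈ G) : minFace A l ≤ G :=
  fun x ⟨hx, b, hb, n, hn⟩ => hG.2 x hx b hb (hn ▸ G.nsmul_mem hl n)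

/-- `A` need not be finitely generated, so choose `l` maximising the group generated by
`minFace A l` (Noetherianity): adding any `a ∈ A` to `l` cannot enlarge that group, so `a` already
lies in it. -/
lemma exists_forall_isFaceOf_mem_imp_le [Module.Finite ℤ L] (A : AddSubmonoid L) :
    ∃ l : ↥A, ∀ G, IsFaceOf A G → (l : L) ∈ G → A ≤ G := by
  obtain ⟨_, ⟨l, rfl⟩, hmax⟩ := set_has_maximal_iff_noetherian.mpr inferInstance
    (Set.range fun l : ↥A => Submodule.span ℤ (minFace A l : Set L)) (Set.range_nonempty _)
  refine ⟨l, fun G hG hlG a ha => minFace_le hG hlG ?_⟩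
  have hle : minFace A l ≤ minFace A (l + a) := fun x ⟨hx, b, hb, n, hn⟩ =>
    ⟨hx, b + n • a, A.add_mem hb (A.nsmul_mem ha n), n, by rw [smul_add, ← hn]; abel⟩
  have hspan : Submodule.span ℤ (minFace A l : Set L) = Submodule.span ℤ (minFace A (l + a)) :=
    (Submodule.span_mono hle).eq_of_not_lt (hmax _ ⟨l + ⟨a, ha⟩, by simp⟩)
  have hmem : a ∈ Submodule.span ℤ (minFace A l : Set L) :=
    hspan ▸ Submodule.subset_span (show a ∈ minFace A (l + a) from
      ⟨ha, l, l.2, 1, by rw [one_smul, add_comm]⟩)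
  rw [← Submodule.mem_toAddSubgroup, Submodule.span_int_eq_addSubgroupClosure] at hmem
  exact (minFace_isFace A l).mem_of_mem_closure ha hmem

end MinFace

section Characters

variable {F : Type u} [Field F] {L : Type v} [AddCommGroup L] {A G G' : AddSubmonoid L}
  {α β : ↥A → F}

lemma IsChar.mul (hα : IsChar F A α) (hβ : IsChar F A β) : IsChar F A (α * β) :=
  ⟨by simp [hα.1, hβ.1], fun a b => by simp only [Pi.mul_apply, hα.2, hβ.2]; ring⟩

lemma IsChar.inv (hα : IsChar F A α) : IsChar F A α⁻¹ :=
  ⟨by simp [hα.1], fun a b => by simp only [Pi.inv_apply, hα.2, mul_inv]⟩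

lemma apply_eq_zero_of_mem_TSet (hα : α ∈ TSet F A G) {a : ↥A} (ha : (a : L) ∉ G) : α a = 0 :=
  not_not.mp fun h => ha ((hα.2 a).mp h)

/-- Off the face `G` both sides of `α (a + b) = α a * α b` vanish. -/
lemma mem_TSet_of_isFaceOf (hG : IsFaceOf A G) (h0 : α 0 = 1)
    (hmul : ∀ a b : ↥A, (a : L) ∈ G → (b : L) ∈ G → α (a + b) = α a * α b)
    (hsupp : ∀ a : ↥A, α a ≠ 0 ↔ (a : L) ∈ G) : α ∈ TSet F A G := by
  refine ⟨⟨h0, fun a b => ?_⟩, hsupp⟩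
  by_cases hab : (a : L) ∈ G ∧ (b : L) ∈ G
  · exact hmul a b hab.1 hab.2
  have hzero (c : ↥A) (hc : (c : L) ∉ G) : α c = 0 := not_not.mp fun h => hc ((hsupp c).mp h)
  rw [hzero (a + b) (fun h => hab ((hG.add_mem_iff a.2 b.2).mp h))]
  rcases not_and_or.mp hab with ha | hb
  · rw [hzero a ha, zero_mul]
  · rw [hzero b hb, mul_zero]

lemma ite_mem_TSet (hG : IsFaceOf A G) {f : ↥A → F} (h0 : f 0 = 1)
    (hmul : ∀ a b : ↥A, (a : L) ∈ G → (b : L) ∈ G → f (a + b) = f a * f b)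
    (hne : ∀ a : ↥A, (a : L) ∈ G → f a ≠ 0) :
    (fun a : ↥A => if (a : L) ∈ G then f a else 0) ∈ TSet F A G := by
  refine mem_TSet_of_isFaceOf hG (by simp [G.zero_mem, h0]) (fun a b ha hb => ?_) (fun a => ?_)
  · simp [ha, hb, G.add_mem ha hb, hmul a b ha hb]
  · by_cases ha : (a : L) ∈ G <;> simp [ha, hne]

lemma eChar_mem_TSet (hG : IsFaceOf A G) : eChar F A G ∈ TSet F A G :=
  ite_mem_TSet hG rfl (fun _ _ _ _ => (one_mul 1).symm) (fun _ _ => one_ne_zero)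

lemma eChar_self : eChar F A A = 1 := funext fun a => if_pos a.2

lemma mul_mem_TSet (hα : α ∈ TSet F A G) (hβ : β ∈ TSet F A G') :
    α * β ∈ TSet F A (G ⊓ G') :=
  ⟨hα.1.mul hβ.1, fun a => by
    rw [Pi.mul_apply, mul_ne_zero_iff, hα.2, hβ.2, AddSubmonoid.mem_inf]⟩

lemma inv_mem_TSet (hα : α ∈ TSet F A G) : α⁻¹ ∈ TSet F A G :=
  ⟨hα.1.inv, fun a => by rw [Pi.inv_apply, ne_eq, inv_eq_zero, ← ne_eq, hα.2]⟩

lemma mul_eChar_of_mem_TSet (hα : α ∈ TSet F A G) : α * eChar F A G = α := by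
  funext a
  by_cases ha : (a : L) ∈ G
  · simp [eChar, ha]
  · simp [eChar, ha, apply_eq_zero_of_mem_TSet hα ha]

lemma mul_inv_of_mem_TSet (hα : α ∈ TSet F A G) : α * α⁻¹ = eChar F A G := by
  funext a
  by_cases ha : (a : L) ∈ G
  · simp [eChar, ha, (hα.2 a).mpr ha]
  · simp [eChar, ha, apply_eq_zero_of_mem_TSet hα ha]

lemma IsChar.exists_isFaceOf_mem_TSet (hα : IsChar F A α) :
    ∃ G, IsFaceOf A G ∧ α ∈ TSet F A G := by
  let G : AddSubmonoid L :=
    { carrier := {x | ∃ h : x ∈ A, α ⟨x, h⟩ ≠ 0}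
      zero_mem' := ⟨A.zero_mem, show α 0 ≠ 0 by rw [hα.1]; exact one_ne_zero⟩
      add_mem' := fun {x y} ⟨hx, hx0⟩ ⟨hy, hy0⟩ => ⟨A.add_mem hx hy,
        show α (⟨x, hx⟩ + ⟨y, hy⟩) ≠ 0 by rw [hα.2]; exact mul_ne_zero hx0 hy0⟩ }
  refine ⟨G, ⟨fun x hx => hx.1, fun a ha b hb ⟨_, hab⟩ => ⟨ha, fun h => hab ?_⟩⟩,
    hα, fun a => ⟨fun h => ⟨a.2, h⟩, fun ⟨_, h⟩ => h⟩⟩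
  change α (⟨a, ha⟩ + ⟨b, hb⟩) = 0
  rw [hα.2, h, zero_mul]

lemma exists_mul_eq_one_iff_mem_TSet_self (hα : IsChar F A α) :
    (∃ β, IsChar F A β ∧ α * β = 1) ↔ α ∈ TSet F A A :=
  ⟨fun ⟨_, _, h⟩ => ⟨hα, fun a => iff_of_true (left_ne_zero_of_mul_eq_one (congrFun h a)) a.2⟩,
    fun h => ⟨α⁻¹, hα.inv, (mul_inv_of_mem_TSet h).trans eChar_self⟩⟩

lemma mul_self_eq_iff_exists_eq_eChar (hα : IsChar F A α) :
    α * α = α ↔ ∃ G, IsFaceOf A G ∧ α = eChar F A G := by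
  refine ⟨fun h => ?_, ?_⟩
  · obtain ⟨G, hG, hαG⟩ := hα.exists_isFaceOf_mem_TSet
    refine ⟨G, hG, funext fun a => ?_⟩
    by_cases ha : (a : L) ∈ G
    · simpa [eChar, ha, (hαG.2 a).mpr ha] using congrFun h a
    · simp [eChar, ha, apply_eq_zero_of_mem_TSet hαG ha]
  · rintro ⟨G, -, rfl⟩
    funext a
    by_cases ha : (a : L) ∈ G <;> simp [eChar, ha]

lemma apply_ne_zero_iff_exists_mem_TSet {lam : ↥A} (hlam : (lam : L) ∈ G)
    (hmin : ∀ G', IsFaceOf A G' → (lam : L) ∈ G' → G ≤ G') (hα : IsChar F A α) :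
    α lam ≠ 0 ↔ ∃ G', IsFaceOf A G' ∧ G ≤ G' ∧ α ∈ TSet F A G' := by
  refine ⟨fun h => ?_, fun ⟨G', _, hle, hαG'⟩ => (hαG'.2 lam).mpr (hle hlam)⟩
  obtain ⟨G', hG', hαG'⟩ := hα.exists_isFaceOf_mem_TSet
  exact ⟨G', hG', hmin G' hG' ((hαG'.2 lam).mp h), hαG'⟩

end Characters

section Torus

variable {F : Type u} [Field F] {L : Type v} [AddCommGroup L] {A G : AddSubmonoid L}
  {γ γ' : ↥(AddSubgroup.closure (G : Set L)) → F}

lemma IsGrpChar.apply_neg (hγ : IsGrpChar F G γ) (z : ↥(AddSubgroup.closure (G : Set L))) :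
    γ (-z) = (γ z)⁻¹ :=
  eq_inv_of_mul_eq_one_left (by rw [← hγ.2.1, neg_add_cancel, hγ.1])

lemma IsGrpChar.ext (hγ : IsGrpChar F G γ) (hγ' : IsGrpChar F G γ')
    (h : ∀ (g : L) (hg : g ∈ G), γ ⟨g, AddSubgroup.subset_closure hg⟩ =
      γ' ⟨g, AddSubgroup.subset_closure hg⟩) : γ = γ' := by
  funext ⟨z, hz⟩
  induction hz using AddSubgroup.closure_induction with
  | mem g hg => exact h g hg
  | zero => exact hγ.1.trans hγ'.1.symm
  | add x y hx hy ihx ihy =>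
    exact (hγ.2.1 ⟨x, hx⟩ ⟨y, hy⟩).trans (ihx ▸ ihy ▸ (hγ'.2.1 ⟨x, hx⟩ ⟨y, hy⟩).symm)
  | neg x hx ih => exact (hγ.apply_neg ⟨x, hx⟩).trans (ih ▸ (hγ'.apply_neg ⟨x, hx⟩).symm)

/-- `γ (a - b) = f a / f b`, well defined because `f` is multiplicative. -/
lemma exists_isGrpChar_extend {f : ↥G → F} (hf : IsChar F G f) (hne : ∀ a, f a ≠ 0) :
    ∃ γ, IsGrpChar F G γ ∧ ∀ g : ↥G, γ ⟨g, AddSubgroup.subset_closure g.2⟩ = f g := by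
  have hwd : ∀ a b a' b' : ↥G, (a : L) - b = a' - b' → f a / f b = f a' / f b' := by
    intro a b a' b' h
    have h' : a + b' = a' + b := Subtype.ext (by simpa using sub_eq_sub_iff_add_eq_add.mp h)
    rw [div_eq_div_iff (hne b) (hne b'), ← hf.2, ← hf.2, h']
  have hrep (z : ↥(AddSubgroup.closure (G : Set L))) : ∃ a b : ↥G, (z : L) = a - b := by
    obtain ⟨a, ha, b, hb, h⟩ := exists_sub_of_mem_closure z.2
    exact ⟨⟨a, ha⟩, ⟨b, hb⟩, h⟩
  choose p q hpq using hrep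
  refine ⟨fun z => f (p z) / f (q z), ⟨?_, fun z w => ?_, fun z => div_ne_zero (hne _) (hne _)⟩,
    fun g => ?_⟩
  · dsimp only
    rw [hwd (p 0) (q 0) 0 0 (by rw [← hpq]; simp), div_self (hne 0)]
  · dsimp only
    rw [hwd (p (z + w)) (q (z + w)) (p z + p w) (q z + q w) (by
      rw [← hpq, AddSubgroup.coe_add, hpq z, hpq w, AddSubmonoid.coe_add, AddSubmonoid.coe_add]
      abel), hf.2, hf.2, div_mul_div_comm]
  · dsimp only
    rw [hwd (p _) (q _) g 0 (by rw [← hpq]; simp), hf.1, div_one]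

lemma phiFun_mem_TSet (hG : IsFaceOf A G) (hγ : IsGrpChar F G γ) :
    PhiFun F A G γ ∈ TSet F A G := by
  refine mem_TSet_of_isFaceOf hG ((dif_pos G.zero_mem).trans hγ.1) (fun a b ha hb => ?_)
    (fun a => ?_)
  · simp only [PhiFun, dif_pos ha, dif_pos hb,
      dif_pos (show ((a + b : ↥A) : L) ∈ G from G.add_mem ha hb)]
    exact hγ.2.1 ⟨a, AddSubgroup.subset_closure ha⟩ ⟨b, AddSubgroup.subset_closure hb⟩
  · by_cases ha : (a : L) ∈ G <;> simp [PhiFun, ha, hγ.2.2]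

lemma exists_isGrpChar_phiFun_eq (hG : IsFaceOf A G) {α : ↥A → F} (hα : α ∈ TSet F A G) :
    ∃ γ, IsGrpChar F G γ ∧ PhiFun F A G γ = α := by
  obtain ⟨γ, hγ, hext⟩ := exists_isGrpChar_extend (f := fun g : ↥G => α ⟨g, hG.1 g.2⟩)
    ⟨hα.1.1, fun a b => hα.1.2 ⟨a, hG.1 a.2⟩ ⟨b, hG.1 b.2⟩⟩ fun g => (hα.2 _).mpr g.2
  refine ⟨γ, hγ, funext fun a => ?_⟩
  by_cases ha : (a : L) ∈ G
  · simp [PhiFun, ha, hext ⟨a, ha⟩]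
  · simp [PhiFun, ha, apply_eq_zero_of_mem_TSet hα ha]

lemma bijOn_phiFun (hG : IsFaceOf A G) :
    Set.BijOn (fun γ : {γ // IsGrpChar F G γ} => PhiFun F A G γ.1) Set.univ (TSet F A G) := by
  refine ⟨fun γ _ => phiFun_mem_TSet hG γ.2, fun γ _ γ' _ h => ?_, fun α hα => ?_⟩
  · refine Subtype.ext (γ.2.ext γ'.2 fun g hg => ?_)
    simpa [PhiFun, hg] using congrFun h ⟨g, hG.1 hg⟩
  · obtain ⟨γ, hγ, rfl⟩ := exists_isGrpChar_phiFun_eq hG hα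
    exact ⟨⟨γ, hγ⟩, trivial, rfl⟩

lemma phiFun_mul {γ'' : ↥(AddSubgroup.closure (G : Set L)) → F}
    (h : ∀ z, γ'' z = γ z * γ' z) (a : ↥A) :
    PhiFun F A G γ'' a = PhiFun F A G γ a * PhiFun F A G γ' a := by
  by_cases ha : (a : L) ∈ G <;> simp [PhiFun, ha, h]

end Torus

section Saturated

variable {F : Type u} [Field F] {L : Type v} [AddCommGroup L] [Module.Finite ℤ L]
  {A G : AddSubmonoid L} {α β : ↥A → F}

/-- `L ⧸ H` is torsion-free, hence free, so the quotient map splits. -/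
lemma exists_addRetraction_of_saturated {H : AddSubgroup L}
    (hH : ∀ (x : L) (n : ℕ), n ≠ 0 → n • x ∈ H → x ∈ H) :
    ∃ p : L →+ L, (∀ x, p x ∈ H) ∧ ∀ x ∈ H, p x = x := by
  let H' := AddSubgroup.toIntSubmodule H
  have : Module.IsTorsionFree ℤ (L ⧸ H') := by
    refine .of_smul_eq_zero fun n x hx => or_iff_not_imp_left.mpr fun hn => ?_
    induction x using Submodule.Quotient.induction_on with | H x => ?_
    rw [← Submodule.Quotient.mk_smul, Submodule.Quotient.mk_eq_zero] at hx
    refine (Submodule.Quotient.mk_eq_zero H').mpr (hH x n.natAbs (by omega) ?_)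
    rcases Int.natAbs_eq n with h | h
    · rwa [h, natCast_zsmul] at hx
    · rw [h, neg_smul, natCast_zsmul] at hx
      exact neg_mem_iff.mp hx
  obtain ⟨s, hs⟩ := Module.projective_lifting_property H'.mkQ LinearMap.id H'.mkQ_surjective
  have hs' (q : L ⧸ H') : H'.mkQ (s q) = q := LinearMap.congr_fun hs q
  refine ⟨(LinearMap.id - s ∘ₗ H'.mkQ).toAddMonoidHom, fun x => ?_, fun x hx => ?_⟩
  · refine (Submodule.Quotient.mk_eq_zero H').mp ?_
    simpa [sub_eq_zero] using (hs' (H'.mkQ x)).symm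
  · simp [(Submodule.Quotient.mk_eq_zero H').mpr hx]

/-- Write `α = Φ_G γ` and extend `γ` from `G - G` to `L` along a retraction, which exists because
`G - G` is saturated. -/
lemma exists_mem_TSet_self_mul_eChar (hsat : ∀ (x : L) (n : ℕ), n ≠ 0 → n • x ∈ A → x ∈ A)
    (hG : IsFaceOf A G) (hα : α ∈ TSet F A G) : ∃ t ∈ TSet F A A, α = t * eChar F A G := by
  obtain ⟨γ, hγ, rfl⟩ := exists_isGrpChar_phiFun_eq hG hα
  obtain ⟨p, hpH, hp⟩ := exists_addRetraction_of_saturated (hG.closure_saturated hsat)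
  refine ⟨fun a => γ ⟨p a, hpH a⟩, ⟨⟨?_, fun a b => ?_⟩, fun a => iff_of_true (hγ.2.2 _) a.2⟩,
    funext fun a => ?_⟩
  · convert hγ.1 using 2
    exact Subtype.ext (map_zero p)
  · convert hγ.2.1 _ _ using 2
    exact Subtype.ext (map_add p _ _)
  · by_cases ha : (a : L) ∈ G
    · simp [PhiFun, eChar, ha, hp a (AddSubgroup.subset_closure ha)]
    · simp [PhiFun, eChar, ha]

lemma mem_TSet_iff_exists_mul (hsat : ∀ (x : L) (n : ℕ), n ≠ 0 → n • x ∈ A → x ∈ A)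
    (hG : IsFaceOf A G) (hα : α ∈ TSet F A G) :
    β ∈ TSet F A G ↔ ∃ t ∈ TSet F A A, β = t * α := by
  refine ⟨fun hβ => ?_, fun ⟨t, ht, hβ⟩ => ?_⟩
  · obtain ⟨s, hs, rfl⟩ := exists_mem_TSet_self_mul_eChar hsat hG hβ
    obtain ⟨t, ht, rfl⟩ := exists_mem_TSet_self_mul_eChar hsat hG hα
    refine ⟨s * t⁻¹, by simpa using mul_mem_TSet hs (inv_mem_TSet ht), ?_⟩
    calc s * eChar F A G = s * (t * t⁻¹) * eChar F A G := by
          rw [mul_inv_of_mem_TSet ht, eChar_self, mul_one]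
      _ = s * t⁻¹ * (t * eChar F A G) := by ring
  · simpa [hβ, inf_eq_right.mpr hG.1] using mul_mem_TSet ht hα

end Saturated

section Zariski

variable {F : Type u} [Field F] [CharZero F] {L : Type v} [AddCommGroup L] [Module.Free ℤ L]

lemma exists_char_apply_ne_one {v : L} (hv : v ≠ 0) :
    ∃ χ : Multiplicative L →* Fˣ, χ (Multiplicative.ofAdd v) ≠ 1 := by
  obtain ⟨ψ, hψ⟩ := Module.Projective.exists_dual_ne_zero ℤ hv
  refine ⟨(zpowersHom Fˣ (Units.mk0 2 two_ne_zero)).comp ψ.toAddMonoidHom.toMultiplicative,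
    fun h => hψ ?_⟩
  have h2 : ((2 : ℚ) ^ ψ v : ℚ) = (1 : ℚ) := by
    apply Rat.cast_injective (α := F)
    simpa [Units.ext_iff] using h
  exact zpow_right_injective₀ (by norm_num) (by norm_num) (h2.trans (zpow_zero 2).symm)

/-- Dual form of Dedekind's independence of characters: since the characters `L → F^×` separate
the points of `L`, the evaluations at distinct points are linearly independent on them. -/
lemma sum_mul_eq_zero_of_forall_char {ι : Type*} [Fintype ι] (d : ι → F) (μ : ι → L)
    (h : ∀ χ : Multiplicative L →* Fˣ, ∑ k, d k * χ (Multiplicative.ofAdd (μ k)) = 0)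
    (g : L → F) : ∑ k, d k * g (μ k) = 0 := by
  let ev (x : L) : (Multiplicative L →* Fˣ) →* F :=
    (Units.coeHom F).comp (MonoidHom.eval (Multiplicative.ofAdd x))
  have hev : Function.Injective ev := fun x y hxy => by
    by_contra hne
    obtain ⟨χ, hχ⟩ := exists_char_apply_ne_one (F := F) (sub_ne_zero.mpr hne)
    have hxy' : χ (Multiplicative.ofAdd x) = χ (Multiplicative.ofAdd y) :=
      Units.ext (DFunLike.congr_fun hxy χ)
    exact hχ (by rw [ofAdd_sub, map_div, hxy', div_self'])
  let l : L →₀ F := ∑ k, Finsupp.single (μ k) (d k)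
  have hl0 : l = 0 := linearIndependent_iff.mp
    ((linearIndependent_monoidHom _ F).comp ev hev) l (by ext χ; simpa [l, map_sum, ev] using h χ)
  simpa [l, map_sum] using congrArg (Finsupp.linearCombination F g) hl0

variable {A G : AddSubmonoid L} {α : ↥A → F}

/-- For every character `χ` of `L`, `χ · e(G) ∈ T(G)`; so the part of the polynomial supported on
`G` vanishes at all characters of `L`, and its coefficients cancel monomial by monomial. -/
lemma mem_ZClos_TSet (hG : IsFaceOf A G) (hα : IsChar F A α)
    (hsupp : ∀ a, α a ≠ 0 → (a : L) ∈ G) : α ∈ ZClos F A (TSet F A G) := by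
  refine ⟨hα, fun n c lam hvan => ?_⟩
  let d (k : Fin n) : F := if (lam k : L) ∈ G then c k else 0
  have hd (k : Fin n) (f : ↥A → F) (hf : ∀ a : ↥A, (a : L) ∉ G → f a = 0) :
      d k * f (lam k) = c k * f (lam k) := by
    by_cases hk : (lam k : L) ∈ G <;> simp [d, hk, hf]
  have hsum := sum_mul_eq_zero_of_forall_char d (fun k => (lam k : L)) (fun χ => ?_)
    (fun x => if h : x ∈ A then α ⟨x, h⟩ else 0)
  · simpa [hd _ α fun a ha => not_not.mp (mt (hsupp a) ha)] using hsum
  · have hχ := ite_mem_TSet hG (f := fun a => (χ (Multiplicative.ofAdd (a : L)) : F)) (by simp)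
      (fun a b _ _ => by simp [ofAdd_add]) (fun a _ => Units.ne_zero _)
    rw [← hvan _ hχ]
    refine Finset.sum_congr rfl fun k _ => ?_
    rw [← hd k _ fun a ha => if_neg ha]
    by_cases hk : (lam k : L) ∈ G <;> simp [d, hk]

lemma mem_ZClos_TSet_iff (hG : IsFaceOf A G) :
    α ∈ ZClos F A (TSet F A G) ↔ ∃ G', IsFaceOf G G' ∧ α ∈ TSet F A G' := by
  refine ⟨fun hα => ?_, fun ⟨G', hG', hα⟩ => mem_ZClos_TSet hG hα.1 fun a ha =>
    hG'.1 ((hα.2 a).mp ha)⟩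
  obtain ⟨G', hG', hαG'⟩ := hα.1.exists_isFaceOf_mem_TSet
  refine ⟨G', hG'.of_le (fun x hx => not_not.mp fun hxG => ?_) hG.1, hαG'⟩
  have hvan : ∀ β ∈ TSet F A G, ∑ k : Fin 1, (1 : Fin 1 → F) k * β ⟨x, hG'.1 hx⟩ = 0 :=
    fun β hβ => by simpa using apply_eq_zero_of_mem_TSet hβ hxG
  exact (hαG'.2 _).mpr hx (by simpa using hα.2 1 1 (fun _ => ⟨x, hG'.1 hx⟩) hvan)

end Zariski

lemma exists_forall_apply_ne_zero_iff_mem_TSet_self {F : Type u} [Field F] {L : Type v}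
    [AddCommGroup L] [Module.Finite ℤ L] (A : AddSubmonoid L) :
    ∃ lam : ↥A, ∀ α : ↥A → F, IsChar F A α → (α lam ≠ 0 ↔ α ∈ TSet F A A) := by
  obtain ⟨lam, hlam⟩ := exists_forall_isFaceOf_mem_imp_le A
  refine ⟨lam, fun α hα => (apply_ne_zero_iff_exists_mem_TSet lam.2 hlam hα).trans
    ⟨fun ⟨G, hG, hle, h⟩ => le_antisymm hG.1 hle ▸ h, fun h => ⟨A, .refl A, le_rfl, h⟩⟩⟩

/-- **The structure of the generalized toric monoid `Ã`.**
Let `A` be a saturated submonoid of a free `ℤ`-module of finite rank, and `F` a field of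
characteristic zero.  Then:
(1) the unit group of `Ã = Hom((A,+),(F,·))` is `T(A)`, the idempotents of `Ã` are exactly the
elements `e(F')`, `F'` a face of `A`, and `Ã = T(A)·E = E·T(A)`;
(2) for every face `F'` of `A`, `T(F')` is a subgroup of `Ã` with unit `e(F')`, isomorphic to
the torus `Hom((F'−F',+),(F^×,·))` via `Φ_{F'}`, and the sets `T(F')` are exactly the orbits of
the left multiplication action of `T(A)` on `Ã`;
(3) the Zariski closure of `T(F')` is the union of the `T(G)` over the faces `G` of `F'`; for
`λ` in the relative interior of a face `F'`, the principal open set `D(λ)` is the union of the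
`T(G)` over the faces `G` of `A` containing `F'`; in particular `T(A)` is principal open and
dense in `Ã`. -/
theorem stmt_15
    (F : Type u) [Field F] [CharZero F]
    (L : Type v) [AddCommGroup L] [Module.Free ℤ L] [Module.Finite ℤ L]
    (A : AddSubmonoid L)
    (hsat : ∀ (x : L) (n : ℕ), n ≠ 0 → n • x ∈ A → x ∈ A) :
    -- (1) `T(A)` is the unit group of `Ã`:
    ((∀ α, IsChar F A α →
        ((∃ β, IsChar F A β ∧ (fun a => α a * β a) = fun _ : ↥A => (1 : F)) ↔
          α ∈ TSet F A A)) ∧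
      -- the idempotents of `Ã` are exactly the `e(F')`, `F'` a face of `A`:
      (∀ α, IsChar F A α →
        ((fun a => α a * α a) = α ↔ ∃ G : AddSubmonoid L, IsFaceOf A G ∧ α = eChar F A G)) ∧
      -- `Ã = T(A) E = E T(A)`:
      (∀ α, IsChar F A α → ∃ t ∈ TSet F A A, ∃ G : AddSubmonoid L, IsFaceOf A G ∧
        α = (fun a => t a * eChar F A G a) ∧ α = (fun a => eChar F A G a * t a))) ∧
    -- (2) each `T(F')` is a subgroup of `Ã` with unit `e(F')`:
    ((∀ G : AddSubmonoid L, IsFaceOf A G →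
        eChar F A G ∈ TSet F A G ∧
        (∀ α ∈ TSet F A G, ∀ β ∈ TSet F A G, (fun a => α a * β a) ∈ TSet F A G) ∧
        (∀ α ∈ TSet F A G, (fun a => α a * eChar F A G a) = α) ∧
        (∀ α ∈ TSet F A G, ∃ β ∈ TSet F A G, (fun a => α a * β a) = eChar F A G)) ∧
      -- `T(F')` is isomorphic to the torus `Hom((F'−F',+),(F^×,·))` via `Φ_{F'}`:
      (∀ G : AddSubmonoid L, IsFaceOf A G →
        Set.BijOn (fun γ : {γ : ↥(AddSubgroup.closure (G : Set L)) → F // IsGrpChar F G γ} =>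
            PhiFun F A G γ.1) Set.univ (TSet F A G) ∧
        (∀ γ γ' γ'' : {γ : ↥(AddSubgroup.closure (G : Set L)) → F // IsGrpChar F G γ},
          (∀ z, γ''.1 z = γ.1 z * γ'.1 z) →
          ∀ a : ↥A, PhiFun F A G γ''.1 a = PhiFun F A G γ.1 a * PhiFun F A G γ'.1 a)) ∧
      -- the `T(F')` are the orbits of the left-multiplication action of `T(A)` on `Ã`:
      (∀ G : AddSubmonoid L, IsFaceOf A G → ∀ α ∈ TSet F A G,
        ∀ β : ↥A → F, (β ∈ TSet F A G ↔ ∃ t ∈ TSet F A A, β = fun a => t a * α a))) ∧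
    -- (3) the Zariski closure of `T(F')` is the union of the `T(G)`, `G` a face of `F'`:
    ((∀ G : AddSubmonoid L, IsFaceOf A G →
        ∀ α : ↥A → F, (α ∈ ZClos F A (TSet F A G) ↔
          ∃ G' : AddSubmonoid L, IsFaceOf G G' ∧ α ∈ TSet F A G')) ∧
      -- `D(λ) = ⋃ {T(G') : G' ⊇ F'}` for `λ` in the relative interior of the face `F'`:
      (∀ (G : AddSubmonoid L) (lam : ↥A), IsFaceOf A G →
        ((lam : L) ∈ G ∧ ∀ G' : AddSubmonoid L, IsFaceOf A G' → (lam : L) ∈ G' → G ≤ G') →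
        ∀ α, IsChar F A α →
          (α lam ≠ 0 ↔ ∃ G' : AddSubmonoid L, IsFaceOf A G' ∧ G ≤ G' ∧ α ∈ TSet F A G')) ∧
      -- `T(A)` is principal open and dense in `Ã`:
      (∃ lam : ↥A, ∀ α, IsChar F A α → (α lam ≠ 0 ↔ α ∈ TSet F A A)) ∧
      (∀ α, IsChar F A α → α ∈ ZClos F A (TSet F A A))) := by
  refine ⟨⟨fun α hα => exists_mul_eq_one_iff_mem_TSet_self hα,
    fun α hα => mul_self_eq_iff_exists_eq_eChar hα, fun α hα => ?_⟩,
    ⟨fun G hG => ⟨eChar_mem_TSet hG, fun α hα β hβ => inf_idem G ▸ mul_mem_TSet hα hβ,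
      fun α hα => mul_eChar_of_mem_TSet hα,
      fun α hα => ⟨α⁻¹, inv_mem_TSet hα, mul_inv_of_mem_TSet hα⟩⟩,
    fun G hG => ⟨bijOn_phiFun hG, fun γ γ' γ'' h => phiFun_mul h⟩,
    fun G hG α hα β => mem_TSet_iff_exists_mul hsat hG hα⟩,
    ⟨fun G hG α => mem_ZClos_TSet_iff hG,
    fun G lam _ hlam α hα => apply_ne_zero_iff_exists_mem_TSet hlam.1 hlam.2 hα,
    exists_forall_apply_ne_zero_iff_mem_TSet_self A,
    fun α hα => mem_ZClos_TSet (.refl A) hα fun a _ => a.2⟩⟩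
  obtain ⟨G, hG, hαG⟩ := hα.exists_isFaceOf_mem_TSet
  obtain ⟨t, ht, h⟩ := exists_mem_TSet_self_mul_eChar hsat hG hαG
  exact ⟨t, ht, G, hG, h, h.trans (mul_comm _ _)⟩
end
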